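/- arXiv:math/0701009 — 12 statements merged into one kernel-verified Lean document; each statement's English description precedes it below -/
import Mathlib

section
/- Let X be a real Banach space, x ∈ S_X, f ∈ S_{X*} with f(x) = 1. If f ω-exposes x, then the canonical image of x in X** is the unique element φ of the closed unit ball of X** with φ(f) = 1 (i.e., f is a Gâteaux-smooth point of X*). -/
open Filter Topology

/-- Weak density lemma (a two-functional instance of Goldstine's theorem): if `‖φ‖ ≤ 1` then
`(φ f, φ g)` lies in the closure of the image of the unit ball under `z ↦ (f z, g z)`. -/
lemma goldstine_two {X : Type*} [NormedAddCommGroup X] [NormedSpace ℝ X]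
    (φ : (X →L[ℝ] ℝ) →L[ℝ] ℝ) (hφ : ‖φ‖ ≤ 1) (f g : X →L[ℝ] ℝ) (ε : ℝ) (hε : 0 < ε) :
    ∃ z : X, ‖z‖ ≤ 1 ∧ |f z - φ f| < ε ∧ |g z - φ g| < ε := by
  by_contra hcon
  push_neg at hcon
  -- the point (φ f, φ g) in ℝ² is not in the closed convex set
  -- C := closure of image of unit ball under z ↦ (f z, g z)
  set S : Set (ℝ × ℝ) := (fun z : X => (f z, g z)) '' Metric.closedBall (0 : X) 1 with hS
  have hpt : (φ f, φ g) ∉ closure S := by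
    intro hmem
    rw [Metric.mem_closure_iff] at hmem
    obtain ⟨p, hpS, hdist⟩ := hmem ε hε
    obtain ⟨z, hz, rfl⟩ := hpS
    rw [Metric.mem_closedBall, dist_zero_right] at hz
    have h1 : |f z - φ f| < ε ∧ |g z - φ g| < ε := by
      have := hdist
      rw [Prod.dist_eq, max_lt_iff] at this
      constructor
      · simpa [Real.dist_eq, abs_sub_comm] using this.1
      · simpa [Real.dist_eq, abs_sub_comm] using this.2
    exact absurd h1.2 (not_lt.2 (hcon z hz h1.1))
  have hconv : Convex ℝ (closure S) := by
    refine Convex.closure ?_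
    rintro p ⟨z, hz, rfl⟩ q ⟨w, hw, rfl⟩ a b ha hb hab
    refine ⟨a • z + b • w, ?_, ?_⟩
    · rw [Metric.mem_closedBall, dist_zero_right] at *
      calc ‖a • z + b • w‖ ≤ ‖a • z‖ + ‖b • w‖ := norm_add_le _ _
        _ = a * ‖z‖ + b * ‖w‖ := by rw [norm_smul, norm_smul, Real.norm_of_nonneg ha,
            Real.norm_of_nonneg hb]
        _ ≤ a * 1 + b * 1 := by gcongr
        _ = 1 := by linarith
    · simp [Prod.smul_mk, Prod.mk_add_mk, map_add, map_smul]
  obtain ⟨L, c, hLS, hLpt⟩ := geometric_hahn_banach_closed_point hconv isClosed_closure hpt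
  set u : ℝ := L (1, 0) with hu
  set v : ℝ := L (0, 1) with hv
  have hLform : ∀ p : ℝ × ℝ, L p = p.1 * u + p.2 * v := by
    intro p
    have : p = p.1 • ((1 : ℝ), (0 : ℝ)) + p.2 • ((0 : ℝ), (1 : ℝ)) := by
      simp [Prod.ext_iff]
    rw [this, map_add, map_smul, map_smul, smul_eq_mul, smul_eq_mul]
    simp [hu, hv]
  set h : X →L[ℝ] ℝ := u • f + v • g with hh
  have hval : ∀ z : X, h z = L (f z, g z) := by
    intro z
    rw [hLform]
    simp [hh, mul_comm]
  have hbound : ∀ z : X, ‖z‖ ≤ 1 → h z < c := by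
    intro z hz
    rw [hval]
    exact hLS _ (subset_closure ⟨z, by simpa using hz, rfl⟩)
  have hnorm : ‖h‖ ≤ c := by
    refine ContinuousLinearMap.opNorm_le_bound _ ?_ ?_
    · have := hbound 0 (by simp)
      simpa using this.le
    · intro z
      rcases eq_or_ne z 0 with rfl | hz0
      · have := hbound 0 (by simp)
        simpa using this.le
      · have hzpos : (0 : ℝ) < ‖z‖ := norm_pos_iff.2 hz0
        have h1 : h (‖z‖⁻¹ • z) < c := by
          refine hbound _ ?_
          rw [norm_smul, norm_inv, norm_norm, inv_mul_cancel₀ hzpos.ne']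
        have h2 : h (-(‖z‖⁻¹ • z)) < c := by
          refine hbound _ ?_
          rw [norm_neg, norm_smul, norm_inv, norm_norm, inv_mul_cancel₀ hzpos.ne']
        simp only [map_neg, map_smul, smul_eq_mul] at h1 h2
        have k1 : ‖z‖ * (‖z‖⁻¹ * h z) < ‖z‖ * c := mul_lt_mul_of_pos_left h1 hzpos
        have k2 : ‖z‖ * -(‖z‖⁻¹ * h z) < ‖z‖ * c := mul_lt_mul_of_pos_left h2 hzpos
        rw [mul_inv_cancel_left₀ hzpos.ne'] at k1
        rw [mul_neg, mul_inv_cancel_left₀ hzpos.ne'] at k2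
        rw [Real.norm_eq_abs, abs_le]
        constructor <;> [linarith [k2]; linarith [k1]]
  have hφle : φ h ≤ c := by
    calc φ h ≤ |φ h| := le_abs_self _
      _ ≤ ‖φ‖ * ‖h‖ := by
          have := φ.le_opNorm h
          simpa [Real.norm_eq_abs] using this
      _ ≤ 1 * c := by
          have hc : 0 ≤ c := le_trans (norm_nonneg h) hnorm
          gcongr
      _ = c := one_mul c
  have hφgt : c < φ h := by
    have heq : φ h = φ f * u + φ g * v := by
      simp [hh, mul_comm]
    rw [heq]
    have := hLpt
    rwa [hLform] at this
  exact absurd hφle (not_le.2 hφgt)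

/-- If `f` ω-exposes `x`, then the canonical image of `x` is the unique element
`φ` of the closed unit ball of `X**` with `φ f = 1`. -/
theorem omega_exposing_gateaux_smooth
    {X : Type*} [NormedAddCommGroup X] [NormedSpace ℝ X] [CompleteSpace X]
    (x : X) (f : X →L[ℝ] ℝ) (hx : ‖x‖ = 1) (hf : ‖f‖ = 1) (hfx : f x = 1)
    (hexp : ∀ xs : ℕ → X, (∀ n, ‖xs n‖ ≤ 1) →
      Tendsto (fun n => f (xs n)) atTop (𝓝 1) →
      ∀ g : X →L[ℝ] ℝ, Tendsto (fun n => g (xs n)) atTop (𝓝 (g x))) :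
    ∀ φ : (X →L[ℝ] ℝ) →L[ℝ] ℝ, ‖φ‖ ≤ 1 → φ f = 1 →
      φ = NormedSpace.inclusionInDoubleDual ℝ X x := by
  intro φ hφ hφf
  ext g
  rw [NormedSpace.dual_def]
  -- choose a sequence via goldstine_two
  have hseq : ∀ n : ℕ, ∃ z : X, ‖z‖ ≤ 1 ∧ |f z - φ f| < 1 / (n + 1) ∧ |g z - φ g| < 1 / (n + 1) :=
    fun n => goldstine_two φ hφ f g (1 / (n + 1)) (by positivity)
  choose zs hz1 hz2 hz3 using hseq
  have htend : ∀ (F : ℕ → ℝ) (a : ℝ), (∀ n, |F n - a| < 1 / (n + 1)) →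
      Tendsto F atTop (𝓝 a) := by
    intro F a hF
    rw [Metric.tendsto_atTop]
    intro ε hε
    obtain ⟨N, hN⟩ := exists_nat_one_div_lt hε
    refine ⟨N, fun n hn => ?_⟩
    rw [Real.dist_eq]
    calc |F n - a| < 1 / (n + 1) := hF n
      _ ≤ 1 / (N + 1) := by
          have hNn : (N : ℝ) ≤ n := Nat.cast_le.mpr hn
          apply one_div_le_one_div_of_le (by positivity)
          linarith
      _ < ε := hN
  have hf_tend : Tendsto (fun n => f (zs n)) atTop (𝓝 1) := by
    have := htend (fun n => f (zs n)) (φ f) hz2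
    rwa [hφf] at this
  have hg_tend : Tendsto (fun n => g (zs n)) atTop (𝓝 (φ g)) :=
    htend (fun n => g (zs n)) (φ g) hz3
  have hg_tend' := hexp zs hz1 hf_tend g
  exact tendsto_nhds_unique hg_tend hg_tend'
end

section
/- Let X be a real Banach space, x ∈ S_X, f ∈ S_{X*} with f(x) = 1. The following are equivalent: (i) f ω-exposes x; (ii) for each norm-closed convex C ⊆ B_X with sup_{y∈C} f(y) = 1, x ∈ C; (iii) the canonical image of x is the unique ψ ∈ S_{X**} with ψ(f) = 1. -/
open Filter Topology

/-- A cluster point of a convergent sequence equals the limit (T2 spaces). -/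
private lemma mapClusterPt_eq_of_tendsto {α : Type*} [TopologicalSpace α] [T2Space α]
    {u : ℕ → α} {a L : α} (h : MapClusterPt a atTop u) (h' : Tendsto u atTop (𝓝 L)) :
    a = L :=
  eq_of_nhds_neBot (h.clusterPt.mono h')

/-- For `x ∈ S_X`, `f ∈ S_{X*}` with `f x = 1`, the following are equivalent:
(i) `f` ω-exposes `x`; (ii) every norm-closed convex `C ⊆ B_X` with `sup_{y∈C} f y = 1`
contains `x`; (iii) the canonical image of `x` is the unique `ψ ∈ S_{X**}` with `ψ f = 1`. -/
theorem omega_exposed_tfae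
    {X : Type*} [NormedAddCommGroup X] [NormedSpace ℝ X] [CompleteSpace X]
    (x : X) (f : X →L[ℝ] ℝ) (hx : ‖x‖ = 1) (hf : ‖f‖ = 1) (hfx : f x = 1) :
    List.TFAE
      [ ∀ xs : ℕ → X, (∀ n, ‖xs n‖ ≤ 1) →
          Tendsto (fun n => f (xs n)) atTop (𝓝 1) →
          ∀ g : X →L[ℝ] ℝ, Tendsto (fun n => g (xs n)) atTop (𝓝 (g x)),
        ∀ C : Set X, IsClosed C → Convex ℝ C → C ⊆ Metric.closedBall (0 : X) 1 →
          IsLUB ((fun y => f y) '' C) 1 → x ∈ C,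
        ∀ ψ : (X →L[ℝ] ℝ) →L[ℝ] ℝ, ‖ψ‖ = 1 → ψ f = 1 →
          ψ = NormedSpace.inclusionInDoubleDual ℝ X x ] := by
  have hfle : ∀ y : X, ‖y‖ ≤ 1 → f y ≤ 1 := by
    intro y hy
    calc f y ≤ |f y| := le_abs_self _
    _ ≤ ‖f‖ * ‖y‖ := f.le_opNorm y
    _ ≤ 1 := by rw [hf]; simpa using hy
  tfae_have 1 → 2 := by
    intro h1 C hCc hCconv hCball hlub
    by_contra hxC
    obtain ⟨g, u, hgu, hux⟩ := geometric_hahn_banach_closed_point hCconv hCc hxC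
    have hseq : ∀ n : ℕ, ∃ y ∈ C, 1 - 1/(n+1) < f y := by
      intro n
      by_contra hno
      push_neg at hno
      have : (1:ℝ) ≤ 1 - 1/(n+1) := by
        refine hlub.2 ?_
        rintro r ⟨y, hy, rfl⟩
        exact hno y hy
      have hpos : (0:ℝ) < 1/(n+1) := by positivity
      linarith
    choose ys hysC hysf using hseq
    have hfy_le : ∀ n, f (ys n) ≤ 1 := fun n => hlub.1 ⟨ys n, hysC n, rfl⟩
    have hlow : Tendsto (fun n : ℕ => 1 - 1/((n:ℝ)+1)) atTop (𝓝 1) := by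
      have : Tendsto (fun n : ℕ => 1 / ((n : ℝ) + 1)) atTop (𝓝 0) :=
        tendsto_one_div_add_atTop_nhds_zero_nat
      simpa using tendsto_const_nhds.sub this
    have htend : Tendsto (fun n => f (ys n)) atTop (𝓝 1) :=
      tendsto_of_tendsto_of_tendsto_of_le_of_le hlow tendsto_const_nhds
        (fun n => (hysf n).le) hfy_le
    have hnorm : ∀ n, ‖ys n‖ ≤ 1 := by
      intro n
      simpa [Metric.mem_closedBall, dist_zero_right] using hCball (hysC n)
    have hgt := h1 ys hnorm htend g
    have hle : g x ≤ u := le_of_tendsto hgt (Eventually.of_forall fun n => (hgu _ (hysC n)).le)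
    linarith
  tfae_have 2 → 1 := by
    intro h2 xs hxs hfxs g
    have key : ∀ g : X →L[ℝ] ℝ, ∀ ε > (0:ℝ), ∀ᶠ n in atTop, g (xs n) < g x + ε := by
      intro g ε hε
      by_contra hfreq
      rw [not_eventually] at hfreq
      push_neg at hfreq
      obtain ⟨φ, hφ, hφg⟩ := Filter.extraction_of_frequently_atTop hfreq
      set C := closure (convexHull ℝ (Set.range (fun k => xs (φ k)))) with hC
      have hCc : IsClosed C := isClosed_closure
      have hCconv : Convex ℝ C := (convex_convexHull ℝ _).closure
      have hball : C ⊆ Metric.closedBall 0 1 := by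
        refine closure_minimal ?_ Metric.isClosed_closedBall
        refine convexHull_min ?_ (convex_closedBall 0 1)
        rintro y ⟨k, rfl⟩
        simpa [Metric.mem_closedBall, dist_zero_right] using hxs (φ k)
      have hmem : ∀ k, xs (φ k) ∈ C := fun k =>
        subset_closure (subset_convexHull ℝ _ ⟨k, rfl⟩)
      have hlub : IsLUB ((fun y => f y) '' C) 1 := by
        constructor
        · rintro r ⟨y, hy, rfl⟩
          exact hfle y (by simpa [Metric.mem_closedBall, dist_zero_right] using hball hy)
        · intro b hb
          have hble : ∀ k, f (xs (φ k)) ≤ b := fun k => hb ⟨_, hmem k, rfl⟩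
          exact le_of_tendsto (hfxs.comp hφ.tendsto_atTop) (Eventually.of_forall hble)
      have hxmem := h2 C hCc hCconv hball hlub
      have hhalfconv : Convex ℝ {y : X | g x + ε ≤ g y} :=
        convex_halfSpace_ge (g : X →ₗ[ℝ] ℝ).isLinear _
      have hhalfcl : IsClosed {y : X | g x + ε ≤ g y} :=
        isClosed_le continuous_const g.continuous
      have hgC : ∀ y ∈ C, g x + ε ≤ g y := by
        intro y hy
        refine closure_minimal (convexHull_min ?_ hhalfconv) hhalfcl hy
        rintro z ⟨k, rfl⟩
        exact hφg k
      linarith [hgC x hxmem]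
    rw [Metric.tendsto_nhds]
    intro ε hε
    filter_upwards [key g ε hε, key (-g) ε hε] with n hn1 hn2
    simp only [ContinuousLinearMap.neg_apply] at hn2
    rw [Real.dist_eq, abs_lt]
    constructor <;> linarith
  tfae_have 1 → 3 := by
    intro h1 ψ hψ hψf
    have key : ∀ g : X →L[ℝ] ℝ, ψ g = g x := by
      intro g
      set S : Set (ℝ × ℝ) := (fun y => (f y, g y)) '' Metric.closedBall 0 1 with hS
      have hSconv : Convex ℝ S :=
        (convex_closedBall (0:X) 1).linear_image ((f.prod g) : X →ₗ[ℝ] ℝ × ℝ)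
      have hmem : ((1:ℝ), ψ g) ∈ closure S := by
        by_contra hp
        obtain ⟨φ, u, hφu, huφ⟩ :=
          geometric_hahn_banach_closed_point hSconv.closure isClosed_closure hp
        set a := φ (1, 0) with ha
        set b := φ (0, 1) with hb
        have hφeval : ∀ p q : ℝ, φ (p, q) = p * a + q * b := by
          intro p q
          have hpq : (p, q) = p • ((1:ℝ), (0:ℝ)) + q • ((0:ℝ), (1:ℝ)) := by
            simp [Prod.ext_iff]
          rw [hpq, map_add, map_smul, map_smul, smul_eq_mul, smul_eq_mul]
        set h : X →L[ℝ] ℝ := a • f + b • g with hh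
        have hval : ∀ y : X, ‖y‖ ≤ 1 → h y < u := by
          intro y hy
          have hyS : ((f y, g y) : ℝ × ℝ) ∈ closure S :=
            subset_closure ⟨y, by simpa [Metric.mem_closedBall, dist_zero_right] using hy, rfl⟩
          have := hφu _ hyS
          rw [hφeval] at this
          simpa [hh, mul_comm] using this
        have hu0 : 0 < u := by simpa using hval 0 (by simp)
        have hnorm : ‖h‖ ≤ u := by
          refine ContinuousLinearMap.opNorm_le_of_unit_norm hu0.le ?_
          intro y hy
          have h1' := hval y hy.le
          have h2' := hval (-y) (by simpa using hy.le)
          rw [map_neg] at h2'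
          rw [Real.norm_eq_abs, abs_le]
          constructor <;> linarith
        have hψh : ψ h = a + b * ψ g := by
          simp [hh, map_add, map_smul, smul_eq_mul, hψf]
        have hφp : φ (1, ψ g) = a + ψ g * b := by rw [hφeval]; ring
        have hble : ψ h ≤ u := by
          calc ψ h ≤ |ψ h| := le_abs_self _
          _ ≤ ‖ψ‖ * ‖h‖ := ψ.le_opNorm h
          _ ≤ u := by rw [hψ, one_mul]; exact hnorm
        rw [hφp] at huφ
        rw [hψh] at hble
        linarith [huφ, hble]
      obtain ⟨q, hqS, hqlim⟩ := mem_closure_iff_seq_limit.1 hmem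
      have hex : ∀ n, ∃ y, ‖y‖ ≤ 1 ∧ (f y, g y) = q n := by
        intro n
        obtain ⟨y, hy, hyq⟩ := hqS n
        exact ⟨y, by simpa [Metric.mem_closedBall, dist_zero_right] using hy, hyq⟩
      choose ys hysball hyseq using hex
      have hq1 : Tendsto (fun n => (q n).1) atTop (𝓝 1) :=
        (continuous_fst.tendsto _).comp hqlim
      have hq2 : Tendsto (fun n => (q n).2) atTop (𝓝 (ψ g)) :=
        (continuous_snd.tendsto _).comp hqlim
      have hfys : Tendsto (fun n => f (ys n)) atTop (𝓝 1) := by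
        convert hq1 using 1
        funext n; rw [← hyseq n]
      have hgys : Tendsto (fun n => g (ys n)) atTop (𝓝 (ψ g)) := by
        convert hq2 using 1
        funext n; rw [← hyseq n]
      have := h1 ys hysball hfys g
      exact tendsto_nhds_unique hgys this
    refine ContinuousLinearMap.ext fun g => ?_
    rw [key g, NormedSpace.dual_def]
  tfae_have 3 → 1 := by
    intro h3 xs hxs hfxs g
    by_contra hng
    rw [Metric.tendsto_nhds] at hng
    push_neg at hng
    obtain ⟨ε, hε, hfreq⟩ := hng
    obtain ⟨φ, hφ, hφg⟩ := Filter.extraction_of_frequently_atTop hfreq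
    -- Bolzano–Weierstrass on the bounded real sequence g (xs (φ k))
    have hbdd : ∀ k, g (xs (φ k)) ∈ Metric.closedBall (0:ℝ) ‖g‖ := by
      intro k
      rw [Metric.mem_closedBall, dist_zero_right, Real.norm_eq_abs]
      calc |g (xs (φ k))| ≤ ‖g‖ * ‖xs (φ k)‖ := g.le_opNorm _
      _ ≤ ‖g‖ := mul_le_of_le_one_right (norm_nonneg g) (hxs _)
    obtain ⟨L, _, σ, hσ, hbL⟩ :=
      tendsto_subseq_of_bounded Metric.isBounded_closedBall hbdd
    have hLne : ε ≤ dist L (g x) := by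
      have hdist : Tendsto (fun j => dist (g (xs (φ (σ j)))) (g x)) atTop (𝓝 (dist L (g x))) :=
        (continuous_id.dist continuous_const).continuousAt.tendsto.comp hbL
      exact le_of_tendsto_of_tendsto tendsto_const_nhds hdist
        (Eventually.of_forall fun j => hφg (σ j))
    set ys : ℕ → X := fun j => xs (φ (σ j)) with hys
    have hysb : ∀ j, ‖ys j‖ ≤ 1 := fun j => hxs _
    have hfys : Tendsto (fun j => f (ys j)) atTop (𝓝 1) :=
      hfxs.comp ((hφ.comp hσ).tendsto_atTop)
    have hgys : Tendsto (fun j => g (ys j)) atTop (𝓝 L) := hbL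
    -- Banach–Alaoglu: get a weak* cluster point of the images in the bidual
    set Φ : ℕ → WeakDual ℝ (X →L[ℝ] ℝ) :=
      fun j => StrongDual.toWeakDual (NormedSpace.inclusionInDoubleDual ℝ X (ys j)) with hΦ
    have hΦball : ∀ j, Φ j ∈ WeakDual.toStrongDual ⁻¹' Metric.closedBall 0 1 := by
      intro j
      rw [Set.mem_preimage, Metric.mem_closedBall]
      refine (dist_zero_right (WeakDual.toStrongDual (Φ j))).trans_le ?_
      calc ‖WeakDual.toStrongDual (Φ j)‖
          = ‖NormedSpace.inclusionInDoubleDual ℝ X (ys j)‖ := rfl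
      _ ≤ ‖ys j‖ := (NormedSpace.inclusionInDoubleDual ℝ X (ys j)).opNorm_le_bound
            (norm_nonneg _) (fun h => by
              rw [NormedSpace.dual_def, mul_comm]
              exact h.le_opNorm _)
      _ ≤ 1 := hysb j
    obtain ⟨ψ₀, hψ₀mem, hclus⟩ :=
      (WeakDual.isCompact_closedBall (𝕜 := ℝ) (E := X →L[ℝ] ℝ) 0 1).exists_mapClusterPt
        (f := atTop) (u := Φ)
        (le_principal_iff.mpr (mem_map.mpr (Eventually.of_forall hΦball)))
    have hclf : MapClusterPt (ψ₀ f) atTop (fun j => f (ys j)) := by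
      have := hclus.continuousAt_comp (f := fun ψ : WeakDual ℝ (X →L[ℝ] ℝ) => ψ f)
        ((WeakDual.eval_continuous f).continuousAt)
      simpa [Function.comp_def, hΦ, NormedSpace.dual_def] using this
    have hclg : MapClusterPt (ψ₀ g) atTop (fun j => g (ys j)) := by
      have := hclus.continuousAt_comp (f := fun ψ : WeakDual ℝ (X →L[ℝ] ℝ) => ψ g)
        ((WeakDual.eval_continuous g).continuousAt)
      simpa [Function.comp_def, hΦ, NormedSpace.dual_def] using this
    have hψf : ψ₀ f = 1 := mapClusterPt_eq_of_tendsto hclf hfys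
    have hψg : ψ₀ g = L := mapClusterPt_eq_of_tendsto hclg hgys
    set Ψ : (X →L[ℝ] ℝ) →L[ℝ] ℝ := WeakDual.toStrongDual ψ₀ with hΨ
    have hΨf : Ψ f = 1 := hψf
    have hΨg : Ψ g = L := hψg
    have hΨnorm : ‖Ψ‖ = 1 := by
      refine le_antisymm ?_ ?_
      · simpa [Metric.mem_closedBall, dist_zero_right] using hψ₀mem
      · calc (1:ℝ) = |Ψ f| := by rw [hΨf]; norm_num
        _ ≤ ‖Ψ‖ * ‖f‖ := Ψ.le_opNorm f
        _ = ‖Ψ‖ := by rw [hf, mul_one]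
    have := h3 Ψ hΨnorm hΨf
    have hLgx : L = g x := by
      rw [← hΨg, this, NormedSpace.dual_def]
    rw [hLgx] at hLne
    simp at hLne
    linarith
  tfae_finish
end

section
/- Let X be a real Banach space, x ∈ S_X a Fréchet-smooth point of the norm, and f ∈ S_{X*} a Gâteaux-smooth point of X* with f(x) = 1. Then x is a ω-LUR point: for every sequence (x_n) in the closed unit ball with ‖x + x_n‖ → 2, the sequence x_n converges weakly to x. -/
open Filter Topology Metric

lemma smulyan_est {X : Type*} [NormedAddCommGroup X] [NormedSpace ℝ X]
    (x : X) (D : X →L[ℝ] ℝ) (hD : HasFDerivAt (fun y : X => ‖y‖) D x) (hx : ‖x‖ = 1)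
    {ε : ℝ} (hε : 0 < ε) :
    ∃ s > 0, ∀ g : X →L[ℝ] ℝ, ‖g‖ ≤ 1 → ‖g - D‖ ≤ (1 - g x) / s + ε := by
  have hlo := (hasFDerivAt_iff_isLittleO_nhds_zero).mp hD
  rw [Asymptotics.isLittleO_iff] at hlo
  have h2 := hlo (show (0:ℝ) < ε/2 by positivity)
  rw [Metric.eventually_nhds_iff] at h2
  obtain ⟨t, ht, H⟩ := h2
  set s := t/2 with hs
  have hs0 : 0 < s := by positivity
  refine ⟨s, hs0, fun g hg => ?_⟩
  have hgx : g x ≤ 1 := by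
    calc g x ≤ |g x| := le_abs_self _
    _ ≤ ‖g‖ * ‖x‖ := by rw [← Real.norm_eq_abs]; exact g.le_opNorm x
    _ ≤ 1 := by rw [hx]; simpa using hg
  have hc0 : 0 ≤ (1 - g x)/s + ε/2 := by
    have : 0 ≤ (1 - g x)/s := div_nonneg (by linarith) hs0.le
    linarith
  have key : ∀ y : X, (g - D) y ≤ ((1 - g x)/s + ε/2) * ‖y‖ := by
    intro y
    rcases eq_or_ne y 0 with rfl | hy0
    · simp
    · have hny : 0 < ‖y‖ := norm_pos_iff.mpr hy0
      set r := s / ‖y‖ with hr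
      have hr0 : 0 < r := by positivity
      have hnorm_ry : ‖r • y‖ = s := by
        rw [norm_smul, Real.norm_eq_abs, abs_of_pos hr0, hr, div_mul_cancel₀ _ hny.ne']
      have hdist : dist (r • y) 0 < t := by
        rw [dist_zero_right, hnorm_ry]; linarith
      have hH := H hdist
      rw [Real.norm_eq_abs] at hH
      have hub : ‖x + r • y‖ ≤ 1 + D (r • y) + (ε/2) * s := by
        have := (abs_le.mp hH).2
        rw [hnorm_ry, hx] at this
        linarith
      have hglb : g (x + r • y) ≤ ‖x + r • y‖ := by
        calc g (x + r • y) ≤ |g (x + r • y)| := le_abs_self _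
        _ ≤ ‖g‖ * ‖x + r • y‖ := by rw [← Real.norm_eq_abs]; exact g.le_opNorm _
        _ ≤ 1 * ‖x + r • y‖ := by
            exact mul_le_mul_of_nonneg_right hg (norm_nonneg _)
        _ = ‖x + r • y‖ := one_mul _
      have hsum : g x + r * g y ≤ 1 + r * D y + (ε/2) * s := by
        have e1 : g (x + r • y) = g x + r * g y := by
          rw [map_add, map_smul]; rfl
        have e2 : D (r • y) = r * D y := by rw [map_smul]; rfl
        rw [e1] at hglb
        rw [e2] at hub
        linarith
      have hr_ineq : r * ((g - D) y) ≤ (1 - g x) + (ε/2) * s := by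
        simp only [ContinuousLinearMap.sub_apply]
        rw [mul_sub]
        linarith
      have : (g - D) y ≤ ((1 - g x) + (ε/2) * s) / r := by
        rw [le_div_iff₀ hr0]
        calc (g - D) y * r = r * (g - D) y := by ring
          _ ≤ (1 - g x) + (ε/2) * s := hr_ineq
      calc (g - D) y ≤ ((1 - g x) + (ε/2) * s) / r := this
        _ = ((1 - g x)/s + ε/2) * ‖y‖ := by
            rw [hr, div_div_eq_mul_div, div_eq_iff hs0.ne']
            field_simp
  have hop : ‖g - D‖ ≤ (1 - g x)/s + ε/2 := by
    refine ContinuousLinearMap.opNorm_le_bound _ hc0 fun y => ?_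
    rw [Real.norm_eq_abs, abs_le]
    constructor
    · have := key (-y)
      rw [map_neg, norm_neg] at this
      linarith
    · exact key y
  linarith

lemma cluster_eq_of_tendsto {a L : ℝ} {v : ℕ → ℝ}
    (hcl : MapClusterPt a atTop v) (hlim : Tendsto v atTop (𝓝 L)) : a = L :=
  eq_of_nhds_neBot (hcl.clusterPt.mono hlim)

lemma weak_cluster {X : Type*} [NormedAddCommGroup X] [NormedSpace ℝ X] (v : ℕ → X)
    (hv : ∀ n, ‖v n‖ ≤ 1) :
    ∃ ψ : (X →L[ℝ] ℝ) →L[ℝ] ℝ, ‖ψ‖ ≤ 1 ∧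
      ∀ h : X →L[ℝ] ℝ, MapClusterPt (ψ h) atTop (fun k => h (v k)) := by
  set u : ℕ → WeakDual ℝ (StrongDual ℝ X) :=
    fun k => StrongDual.toWeakDual (NormedSpace.inclusionInDoubleDual ℝ X (v k)) with hu
  have hmem : ∀ k, u k ∈ WeakDual.toStrongDual ⁻¹' Metric.closedBall 0 1 := by
    intro k
    simp only [Set.mem_preimage, Metric.mem_closedBall, dist_zero_right, hu]
    rw [StrongDual.toStrongDual_toWeakDual]
    have := @dist_zero_right (StrongDual ℝ (StrongDual ℝ X)) _ (NormedSpace.inclusionInDoubleDual ℝ X (v k))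
    rw [this]
    exact le_trans (NormedSpace.double_dual_bound ℝ X _) (hv _)
  obtain ⟨ψ, hψmem, hψcl⟩ :=
    (WeakDual.isCompact_closedBall (𝕜 := ℝ) (E := StrongDual ℝ X) 0 1).exists_mapClusterPt
      (f := atTop) (u := u) (Filter.tendsto_principal.mpr (Eventually.of_forall hmem))
  refine ⟨WeakDual.toStrongDual ψ, ?_, ?_⟩
  · have := hψmem
    rw [Set.mem_preimage, Metric.mem_closedBall, dist_zero_right] at this
    exact this
  · intro h
    have hclf := hψcl.continuousAt_comp (WeakDual.eval_continuous (𝕜 := ℝ) h).continuousAt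
    have he : ((fun (y : WeakDual ℝ (StrongDual ℝ X)) => y h) ∘ u) = fun k => h (v k) := by
      funext k
      simp only [Function.comp_apply, hu, StrongDual.coe_toWeakDual]
      exact NormedSpace.dual_def ℝ X (v k) h
    have happ : (WeakDual.toStrongDual ψ) h = ψ h := WeakDual.toStrongDual_apply ψ h
    rw [happ, ← he]
    exact hclf

/-- If `x ∈ S_X` is a Fréchet-smooth point of the norm and `f ∈ S_{X*}` is a
Gâteaux-smooth point of `X*` with `f x = 1`, then `x` is a ω-LUR point. -/
theorem frechet_and_dual_gateaux_implies_wLUR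
    {X : Type*} [NormedAddCommGroup X] [NormedSpace ℝ X] [CompleteSpace X]
    (x : X) (f : X →L[ℝ] ℝ) (hx : ‖x‖ = 1) (hf : ‖f‖ = 1) (hfx : f x = 1)
    (hFsmooth : DifferentiableAt ℝ (fun y : X => ‖y‖) x)
    (hGsmooth : ∀ ψ : (X →L[ℝ] ℝ) →L[ℝ] ℝ, ‖ψ‖ = 1 → ψ f = 1 →
      ψ = NormedSpace.inclusionInDoubleDual ℝ X x) :
    ∀ xs : ℕ → X, (∀ n, ‖xs n‖ ≤ 1) →
      Tendsto (fun n => ‖x + xs n‖) atTop (𝓝 2) →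
      ∀ g : X →L[ℝ] ℝ, Tendsto (fun n => g (xs n)) atTop (𝓝 (g x)) := by
  intro xs hball hnorm g
  have hx0 : x ≠ 0 := fun h => by simp [h] at hx
  haveI : Nontrivial X := nontrivial_of_ne x 0 hx0
  obtain ⟨D, hD⟩ : ∃ D, HasFDerivAt (fun y : X => ‖y‖) D x := ⟨_, hFsmooth.hasFDerivAt⟩
  -- Step 1 : f is the Fréchet derivative of the norm at x
  have hDf : HasFDerivAt (fun y : X => ‖y‖) f x := by
    have h0 : ∀ ε > 0, ‖f - D‖ ≤ 0 + ε := by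
      intro ε hε
      obtain ⟨s, hs, H⟩ := smulyan_est x D hD hx hε
      have := H f hf.le
      rw [hfx] at this
      simpa using this
    have hz : ‖f - D‖ ≤ 0 := le_of_forall_pos_le_add h0
    have : f - D = 0 := by
      rw [← norm_le_zero_iff]; exact hz
    have hfD : f = D := sub_eq_zero.mp this
    rwa [hfD]
  -- Step 2 : supporting functionals
  choose gs hgs1 hgs2' using fun n => exists_dual_vector' ℝ (x + xs n)
  have hgs2 : ∀ n, gs n (x + xs n) = ‖x + xs n‖ := fun n => by
    have := hgs2' n; simpa using this
  -- Step 3 : gs n x → 1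
  have h1 : Tendsto (fun n => gs n x) atTop (𝓝 1) := by
    have hlow : ∀ n, ‖x + xs n‖ - 1 ≤ gs n x := by
      intro n
      have e : gs n x = ‖x + xs n‖ - gs n (xs n) := by
        have := hgs2 n
        have e2 : gs n (x + xs n) = gs n x + gs n (xs n) := map_add _ _ _
        rw [e2] at this
        linarith [this]
      have hb : gs n (xs n) ≤ 1 := by
        calc gs n (xs n) ≤ |gs n (xs n)| := le_abs_self _
        _ ≤ ‖gs n‖ * ‖xs n‖ := by rw [← Real.norm_eq_abs]; exact (gs n).le_opNorm _
        _ ≤ 1 := by rw [hgs1 n, one_mul]; exact hball n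
      rw [e]; linarith
    have hupp : ∀ n, gs n x ≤ 1 := by
      intro n
      calc gs n x ≤ |gs n x| := le_abs_self _
      _ ≤ ‖gs n‖ * ‖x‖ := by rw [← Real.norm_eq_abs]; exact (gs n).le_opNorm _
      _ = 1 := by rw [hgs1 n, hx, one_mul]
    have hA : Tendsto (fun n => ‖x + xs n‖ - 1) atTop (𝓝 1) := by
      have := hnorm.sub_const 1
      norm_num at this
      exact this
    exact tendsto_of_tendsto_of_tendsto_of_le_of_le hA tendsto_const_nhds hlow hupp
  -- Step 4 : gs n → f in norm (Šmulyan)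
  have h2 : Tendsto (fun n => ‖gs n - f‖) atTop (𝓝 0) := by
    rw [Metric.tendsto_atTop]
    intro ε hε
    obtain ⟨s, hs0, H⟩ := smulyan_est x f hDf hx (show 0 < ε/3 by positivity)
    have hto : Tendsto (fun n => (1 - gs n x)/s) atTop (𝓝 0) := by
      have := ((tendsto_const_nhds (x := (1:ℝ)) (f := atTop)).sub h1).div_const s
      norm_num at this
      exact this
    have hev : ∀ᶠ n in atTop, (1 - gs n x)/s < ε/3 :=
      hto.eventually (gt_mem_nhds (show 0 < ε/3 by positivity))
    obtain ⟨N, hN⟩ := hev.exists_forall_of_atTop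
    refine ⟨N, fun n hn => ?_⟩
    rw [Real.dist_eq, sub_zero, abs_of_nonneg (by positivity : (0:ℝ) ≤ ‖gs n - f‖)]
    have hb := H (gs n) (hgs1 n).le
    have := hN n hn
    calc ‖gs n - f‖ ≤ (1 - gs n x)/s + ε/3 := hb
      _ < ε/3 + ε/3 := by linarith
      _ < ε := by linarith
  -- Step 5 : f (xs n) → 1
  have h3 : Tendsto (fun n => f (xs n)) atTop (𝓝 1) := by
    have hA : Tendsto (fun n => gs n (xs n)) atTop (𝓝 1) := by
      have heq : ∀ n, gs n (xs n) = ‖x + xs n‖ - gs n x := by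
        intro n
        have := hgs2 n
        have e2 : gs n (x + xs n) = gs n x + gs n (xs n) := map_add _ _ _
        rw [e2] at this
        linarith [this]
      have := hnorm.sub h1
      norm_num at this
      simpa [heq] using this
    have hB : Tendsto (fun n => (f - gs n) (xs n)) atTop (𝓝 0) := by
      refine squeeze_zero_norm (fun n => ?_) h2
      calc ‖(f - gs n) (xs n)‖ ≤ ‖f - gs n‖ * ‖xs n‖ := (f - gs n).le_opNorm _
        _ ≤ ‖f - gs n‖ * 1 := mul_le_mul_of_nonneg_left (hball n) (norm_nonneg _)
        _ = ‖gs n - f‖ := by rw [mul_one, norm_sub_rev]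
    have := hB.add hA
    norm_num at this
    have heq : ∀ n, (f - gs n) (xs n) + gs n (xs n) = f (xs n) := by
      intro n; simp [ContinuousLinearMap.sub_apply]
    simpa [heq] using this
  -- Step 6 : weak-star compactness
  refine Filter.tendsto_of_subseq_tendsto fun ns hns => ?_
  have hbdd : ∀ k, g (xs (ns k)) ∈ Set.Icc (-‖g‖) ‖g‖ := by
    intro k
    have habs : |g (xs (ns k))| ≤ ‖g‖ := by
      rw [← Real.norm_eq_abs]
      calc ‖g (xs (ns k))‖ ≤ ‖g‖ * ‖xs (ns k)‖ := g.le_opNorm _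
        _ ≤ ‖g‖ * 1 := mul_le_mul_of_nonneg_left (hball _) (norm_nonneg _)
        _ = ‖g‖ := mul_one _
    exact abs_le.mp habs
  obtain ⟨c, -, φ, hφ, hcφ⟩ :=
    tendsto_subseq_of_bounded (Metric.isBounded_Icc (-‖g‖) ‖g‖) hbdd
  refine ⟨φ, ?_⟩
  obtain ⟨Ψ, hΨle, hΨcl⟩ := weak_cluster (fun k => xs (ns (φ k))) (fun k => hball _)
  have hΨf : Ψ f = 1 :=
    cluster_eq_of_tendsto (hΨcl f) (h3.comp (hns.comp hφ.tendsto_atTop))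
  have hΨg : Ψ g = c := cluster_eq_of_tendsto (hΨcl g) hcφ
  have hΨn : ‖Ψ‖ = 1 := by
    have hge : 1 ≤ ‖Ψ‖ := by
      have h := Ψ.le_opNorm f
      rw [hf, mul_one] at h
      calc (1:ℝ) = Ψ f := hΨf.symm
        _ ≤ ‖Ψ f‖ := le_abs_self _
        _ ≤ ‖Ψ‖ := h
    linarith
  have hΨJ : Ψ = NormedSpace.inclusionInDoubleDual ℝ X x := hGsmooth _ hΨn hΨf
  have hcgx : c = g x := by
    rw [← hΨg, hΨJ]
    exact NormedSpace.dual_def ℝ X x g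
  rw [← hcgx]
  exact hcφ
end

section
/- Let X be a real Banach space and x* ∈ S_{X*} a very smooth point, i.e., x* considered as an element of S_{X***} via the canonical embedding X* → X*** is a Gâteaux-smooth point of X***. Then there exists x ∈ S_X such that x*(x) = 1, and x* ω-exposes the canonical image of x in X**. -/
namespace NormedSpace

/-- The topological dual of a seminormed space `E` (the former `NormedSpace.Dual`, removed
from Mathlib; restored here with its old definition). -/
abbrev Dual (𝕜 : Type*) [NontriviallyNormedField 𝕜] (E : Type*) [SeminormedAddCommGroup E]
    [NormedSpace 𝕜 E] : Type _ :=
  E →L[𝕜] 𝕜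

end NormedSpace

set_option maxHeartbeats 1000000
set_option synthInstance.maxHeartbeats 1000000


open Filter Topology NormedSpace Metric

/-- A real sequence with a cluster point along `l` that also tends to `b` along `l`
has that cluster point equal to `b`. -/
lemma aux_mapClusterPt_eq {α : Type*} {u : α → ℝ} {l : Filter α} [l.NeBot] {a b : ℝ}
    (h : MapClusterPt a l u) (h2 : Tendsto u l (𝓝 b)) : a = b :=
  eq_of_nhds_neBot (Filter.neBot_of_le (le_inf inf_le_left (le_trans inf_le_right h2))
    (hf := h.clusterPt))

/-- A cluster point of a sequence eventually in a closed set lies in that set. -/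
lemma aux_mapClusterPt_mem {α : Type*} {u : α → ℝ} {l : Filter α} [l.NeBot] {a : ℝ}
    {s : Set ℝ} (h : MapClusterPt a l u) (hs : IsClosed s) (hev : ∀ᶠ n in l, u n ∈ s) :
    a ∈ s := by
  have h1 : ClusterPt a (𝓟 s) :=
    h.clusterPt.mono (Filter.tendsto_principal.mpr hev)
  exact hs.closure_eq ▸ mem_closure_iff_clusterPt.mpr h1

/-- Weak-* cluster point extraction from a bounded sequence of functionals,
recording convergence of all evaluations. -/
lemma aux_cluster {Z : Type*} [NormedAddCommGroup Z] [NormedSpace ℝ Z]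
    (φ : ℕ → Dual ℝ Z) (hφ : ∀ n, ‖φ n‖ ≤ 1) (l : Filter ℕ) [l.NeBot] :
    ∃ Ψ : Dual ℝ Z, ‖Ψ‖ ≤ 1 ∧ ∀ z : Z, MapClusterPt (Ψ z) l (fun n => φ n z) := by
  have hK : IsCompact (WeakDual.toStrongDual ⁻¹' closedBall (0 : Dual ℝ Z) 1) :=
    WeakDual.isCompact_closedBall (𝕜 := ℝ) 0 1
  set u : ℕ → WeakDual ℝ Z := fun n => StrongDual.toWeakDual (φ n) with hu
  have hmem : ∀ n, u n ∈ WeakDual.toStrongDual ⁻¹' closedBall (0 : Dual ℝ Z) 1 := by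
    intro n
    simp only [Set.mem_preimage, mem_closedBall_zero_iff, u]
    have : WeakDual.toStrongDual (StrongDual.toWeakDual (φ n)) = φ n :=
      StrongDual.toWeakDual.symm_apply_apply (φ n)
    rw [this]
    exact hφ n
  have hle : Filter.map u l ≤ 𝓟 (WeakDual.toStrongDual ⁻¹' closedBall (0 : Dual ℝ Z) 1) :=
    Filter.tendsto_principal.mpr (Filter.Eventually.of_forall hmem)
  obtain ⟨Ψw, hmemΨ, hcl⟩ := hK.exists_mapClusterPt hle
  refine ⟨WeakDual.toStrongDual Ψw, ?_, ?_⟩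
  · simpa [mem_closedBall_zero_iff] using hmemΨ
  · intro z
    have hc : ContinuousAt (fun Φ : WeakDual ℝ Z => Φ z) Ψw :=
      (WeakDual.eval_continuous z).continuousAt
    have := hcl.continuousAt_comp hc
    exact this

/-- If `x* ∈ S_{X*}` is very smooth (its canonical image in `X***` is a
Gâteaux-smooth point of `X***`, i.e. there is a unique `Ψ ∈ S_{X****}` with
`Ψ (j x*) = 1`), then there is `x ∈ S_X` with `x* x = 1`, and `x*` ω-exposes the
canonical image of `x` in `X**`. -/
theorem very_smooth_omega_exposes
    {X : Type*} [NormedAddCommGroup X] [NormedSpace ℝ X] [CompleteSpace X]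
    (xstar : Dual ℝ X) (hxstar : ‖xstar‖ = 1)
    (hvs : ∃! Ψ : Dual ℝ (Dual ℝ (Dual ℝ (Dual ℝ X))),
      ‖Ψ‖ = 1 ∧ Ψ (inclusionInDoubleDual ℝ (Dual ℝ X) xstar) = 1) :
    ∃ x : X, ‖x‖ = 1 ∧ xstar x = 1 ∧
      ∀ φs : ℕ → Dual ℝ (Dual ℝ X), (∀ n, ‖φs n‖ ≤ 1) →
        Tendsto (fun n => φs n xstar) atTop (𝓝 1) →
        ∀ G : Dual ℝ (Dual ℝ (Dual ℝ X)),
          Tendsto (fun n => G (φs n)) atTop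
            (𝓝 (G (inclusionInDoubleDual ℝ X x))) := by
  obtain ⟨Ψ₀, ⟨hΨ₀n, hΨ₀v⟩, hΨ₀u⟩ := hvs
  set j₁ := inclusionInDoubleDual ℝ X with hj₁
  set j₂ := inclusionInDoubleDual ℝ (Dual ℝ X) with hj₂
  set j₃ := inclusionInDoubleDual ℝ (Dual ℝ (Dual ℝ X)) with hj₃
  have hj₂norm : ‖j₂ xstar‖ = 1 := by
    rw [hj₂]
    have := (inclusionInDoubleDualLi ℝ (E := Dual ℝ X)).norm_map xstar
    rw [hxstar] at this
    exact this
  -- Key step: any bounded sequence on which xstar tends to 1 has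
  -- weak limits given by Ψ₀.
  have keyA : ∀ φ : ℕ → Dual ℝ (Dual ℝ X), (∀ n, ‖φ n‖ ≤ 1) →
      Tendsto (fun n => φ n xstar) atTop (𝓝 1) →
      ∀ G : Dual ℝ (Dual ℝ (Dual ℝ X)),
        Tendsto (fun n => G (φ n)) atTop (𝓝 (Ψ₀ G)) := by
    intro φ hb ht G
    by_contra hnot
    rw [Metric.tendsto_atTop] at hnot
    push_neg at hnot
    obtain ⟨ε, hε, hfreq⟩ := hnot
    set l : Filter ℕ := atTop ⊓ 𝓟 {n | ε ≤ dist (G (φ n)) (Ψ₀ G)} with hl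
    haveI hlne : l.NeBot := by
      rw [hl, ← Filter.frequently_iff_neBot]
      rw [Filter.frequently_atTop]
      intro N
      obtain ⟨n, hn, hn2⟩ := hfreq N
      exact ⟨n, hn, hn2⟩
    have hbb : ∀ n, ‖j₃ (φ n)‖ ≤ 1 :=
      fun n => le_trans (double_dual_bound ℝ _ (φ n)) (hb n)
    set_option maxSynthPendingDepth 3 in
    obtain ⟨Ψ', hΨ'n, hΨ'⟩ := @aux_cluster (Dual ℝ (Dual ℝ (Dual ℝ X))) inferInstance inferInstance
      (fun n => j₃ (φ n)) hbb l inferInstance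
    have happ : ∀ z : Dual ℝ (Dual ℝ (Dual ℝ X)), ∀ n, j₃ (φ n) z = z (φ n) :=
      fun z n => rfl
    -- Ψ' (j₂ xstar) = 1
    have h1 : Ψ' (j₂ xstar) = 1 := by
      have hcl := hΨ' (j₂ xstar)
      have htend : Tendsto (fun n => j₃ (φ n) (j₂ xstar)) l (𝓝 1) := by
        have : (fun n => j₃ (φ n) (j₂ xstar)) = fun n => φ n xstar := rfl
        rw [this]
        exact ht.mono_left inf_le_left
      exact aux_mapClusterPt_eq hcl htend
    -- ‖Ψ'‖ = 1
    have h2 : ‖Ψ'‖ = 1 := by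
      refine le_antisymm hΨ'n ?_
      have h3 := Ψ'.le_opNorm (j₂ xstar)
      rw [h1, hj₂norm, mul_one, norm_one] at h3
      exact h3
    have h3 : Ψ' = Ψ₀ := hΨ₀u Ψ' ⟨h2, h1⟩
    -- contradiction via the closed set
    have h4 : Ψ' G ∈ {r : ℝ | ε ≤ dist r (Ψ₀ G)} := by
      refine aux_mapClusterPt_mem (hΨ' G) ?_ ?_
      · exact isClosed_le continuous_const (continuous_id.dist continuous_const)
      · have : {n | ε ≤ dist (G (φ n)) (Ψ₀ G)} ∈ l :=
          Filter.mem_inf_of_right (Filter.mem_principal_self _)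
        filter_upwards [this] with n hn
        exact hn
    rw [h3] at h4
    simp only [Set.mem_setOf_eq, dist_self] at h4
    exact absurd h4 (not_le.mpr hε)
  -- A norming sequence in the ball of X
  have hxs : ∀ n : ℕ, ∃ x : X, ‖x‖ ≤ 1 ∧ 1 - 1 / (n + 1) < xstar x := by
    intro n
    have hr : (1 : ℝ) - 1 / (n + 1) < ‖xstar‖ := by
      rw [hxstar]
      have : (0 : ℝ) < 1 / (n + 1) := by positivity
      linarith
    obtain ⟨x, hx1, hx2⟩ := xstar.exists_lt_apply_of_lt_opNorm hr
    rcases le_or_gt 0 (xstar x) with h | h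
    · exact ⟨x, hx1.le, by rwa [Real.norm_eq_abs, abs_of_nonneg h] at hx2⟩
    · refine ⟨-x, by simpa using hx1.le, ?_⟩
      rw [map_neg]
      rwa [Real.norm_eq_abs, abs_of_neg h] at hx2
  choose xs hxs1 hxs2 using hxs
  have hxst : Tendsto (fun n => xstar (xs n)) atTop (𝓝 1) := by
    have hlow : Tendsto (fun n : ℕ => 1 - 1 / ((n : ℝ) + 1)) atTop (𝓝 1) := by
      have := tendsto_one_div_add_atTop_nhds_zero_nat (𝕜 := ℝ)
      have h2 := tendsto_const_nhds (f := atTop (α := ℕ)) (x := (1 : ℝ))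
      simpa using h2.sub this
    refine tendsto_of_tendsto_of_tendsto_of_le_of_le hlow tendsto_const_nhds
      (fun n => (hxs2 n).le) (fun n => ?_)
    calc xstar (xs n) ≤ ‖xstar (xs n)‖ := le_abs_self _
      _ ≤ ‖xstar‖ * ‖xs n‖ := xstar.le_opNorm _
      _ ≤ 1 := by rw [hxstar, one_mul]; exact hxs1 n
  -- the weak-* cluster point Φ in X**
  have hbb1 : ∀ n, ‖j₁ (xs n)‖ ≤ 1 :=
    fun n => le_trans (double_dual_bound ℝ X (xs n)) (hxs1 n)
  obtain ⟨Φ, hΦn, hΦ⟩ := @aux_cluster (Dual ℝ X) inferInstance inferInstance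
    (fun n => j₁ (xs n)) hbb1 atTop inferInstance
  have hΦx : Φ xstar = 1 := by
    have hcl := hΦ xstar
    have htend : Tendsto (fun n => j₁ (xs n) xstar) atTop (𝓝 1) := hxst
    exact aux_mapClusterPt_eq hcl htend
  -- Ψ₀ = j₃ Φ
  have hΨΦ : j₃ Φ = Ψ₀ := by
    refine hΨ₀u (j₃ Φ) ⟨?_, ?_⟩
    · refine le_antisymm (le_trans (double_dual_bound ℝ _ Φ) hΦn) ?_
      have h1 : j₃ Φ (j₂ xstar) = 1 := hΦx
      have h3 := (j₃ Φ).le_opNorm (j₂ xstar)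
      rw [h1, hj₂norm, mul_one, norm_one] at h3
      exact h3
    · exact hΦx
  -- xstar norms j₁ (xs n), so keyA applies to it
  have hkey : ∀ G : Dual ℝ (Dual ℝ (Dual ℝ X)),
      Tendsto (fun n => G (j₁ (xs n))) atTop (𝓝 (G Φ)) := by
    intro G
    have := keyA (fun n => j₁ (xs n)) hbb1 hxst G
    rwa [← hΨΦ] at this
  -- Φ lies in the canonical image of X
  have hrange : Φ ∈ LinearMap.range (j₁ : X →ₗ[ℝ] Dual ℝ (Dual ℝ X)) := by
    by_contra hmem
    have hclosed : IsClosed ((LinearMap.range (j₁ : X →ₗ[ℝ] Dual ℝ (Dual ℝ X)) :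
        Submodule ℝ (Dual ℝ (Dual ℝ X))) : Set (Dual ℝ (Dual ℝ X))) := by
      have h1 : ((LinearMap.range (j₁ : X →ₗ[ℝ] Dual ℝ (Dual ℝ X)) :
          Submodule ℝ (Dual ℝ (Dual ℝ X))) : Set (Dual ℝ (Dual ℝ X))) =
          Set.range (inclusionInDoubleDualLi ℝ (E := X)) := by
        ext y
        simp only [SetLike.mem_coe, LinearMap.mem_range, Set.mem_range]
        rfl
      rw [h1]
      exact ((inclusionInDoubleDualLi ℝ (E := X)).isometry.isClosedEmbedding
        (γ := Dual ℝ (Dual ℝ X))).isClosed_range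
    obtain ⟨f, c, hfc, hcf⟩ := geometric_hahn_banach_closed_point
      (Submodule.convex _) hclosed hmem
    have hf0 : ∀ x : X, f (j₁ x) = 0 := by
      intro x
      by_contra hne
      have : ∀ t : ℝ, t * f (j₁ x) < c := by
        intro t
        have hmemt : (t • j₁ x) ∈ LinearMap.range (j₁ : X →ₗ[ℝ] Dual ℝ (Dual ℝ X)) :=
          ⟨t • x, by simp⟩
        have := hfc _ hmemt
        rwa [map_smul, smul_eq_mul] at this
      have h5 := this ((c + 1) / f (j₁ x))
      rw [div_mul_cancel₀ _ hne] at h5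
      linarith
    have hc0 : 0 < c := by
      have := hfc 0 (Submodule.zero_mem _)
      simpa using this
    have h5 : Tendsto (fun n => f (j₁ (xs n))) atTop (𝓝 (f Φ)) := hkey f
    have h6 : Tendsto (fun n => f (j₁ (xs n))) atTop (𝓝 (0 : ℝ)) := by
      simp only [hf0]
      exact tendsto_const_nhds
    have h7 : f Φ = 0 := tendsto_nhds_unique h5 h6
    rw [h7] at hcf
    linarith
  obtain ⟨x, hx⟩ := hrange
  have hxeq : j₁ x = Φ := hx
  have hxx : xstar x = 1 := by
    have : j₁ x xstar = Φ xstar := by rw [hxeq]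
    rwa [hΦx] at this
  have hxnorm : ‖x‖ = 1 := by
    refine le_antisymm ?_ ?_
    · have := (inclusionInDoubleDualLi ℝ (E := X)).norm_map x
      have h2 : ‖j₁ x‖ = ‖x‖ := this
      rw [hxeq] at h2
      rw [← h2]
      exact hΦn
    · have := xstar.le_opNorm x
      rw [hxstar, one_mul] at this
      calc (1 : ℝ) = xstar x := hxx.symm
        _ ≤ ‖xstar x‖ := le_abs_self _
        _ ≤ ‖x‖ := this
  refine ⟨x, hxnorm, hxx, ?_⟩
  intro φs hφb hφt G
  have h9 := keyA φs hφb hφt G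
  have e : Ψ₀ G = G (j₁ x) := by rw [← hΨΦ, ← hxeq]; rfl
  rwa [e] at h9
end

section
/- Let X be a real Banach space such that some equivalent norm on X makes X** ω-LUR (every point of the unit sphere of X** is a ω-LUR point). Then X is reflexive. -/
open Filter Topology

set_option maxHeartbeats 1000000

/-- If some equivalent norm on `X` (encoded as an isomorphic Banach space `Y`)
makes the bidual ω-LUR, then `X` is reflexive. -/
theorem reflexive_of_bidual_wLUR_renorming
    {X : Type u} [NormedAddCommGroup X] [NormedSpace ℝ X] [CompleteSpace X]
    (h : ∃ (Y : Type u) (_ : NormedAddCommGroup Y) (_ : NormedSpace ℝ Y)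
        (_ : CompleteSpace Y) (_ : X ≃L[ℝ] Y),
      ∀ φ : (Y →L[ℝ] ℝ) →L[ℝ] ℝ, ‖φ‖ = 1 →
        ∀ φs : ℕ → (Y →L[ℝ] ℝ) →L[ℝ] ℝ, (∀ n, ‖φs n‖ ≤ 1) →
          Tendsto (fun n => ‖φ + φs n‖) atTop (𝓝 2) →
          ∀ G : ((Y →L[ℝ] ℝ) →L[ℝ] ℝ) →L[ℝ] ℝ,
            Tendsto (fun n => G (φs n)) atTop (𝓝 (G φ))) :
    Function.Surjective (NormedSpace.inclusionInDoubleDual ℝ X) := by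
  obtain ⟨Y, _, _, _, e, hLUR⟩ := h
  -- Step 1: Y is reflexive.
  set ιY := NormedSpace.inclusionInDoubleDual ℝ Y with hιY
  have hY : Function.Surjective ιY := by
    intro φ
    rcases eq_or_ne φ 0 with rfl | hφ
    · exact ⟨0, by simp⟩
    have hφn : (0:ℝ) < ‖φ‖ := by
      rcases (norm_nonneg φ).lt_or_eq with h | h
      · exact h
      · exact absurd ((ContinuousLinearMap.opNorm_zero_iff φ).mp h.symm) hφ
    set ψ := ‖φ‖⁻¹ • φ with hψdef
    have hψ : ‖ψ‖ = 1 := by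
      haveI : NormSMulClass ℝ (StrongDual ℝ (StrongDual ℝ Y)) := NormedSpace.toNormSMulClass (𝕜 := ℝ) (E := StrongDual ℝ (StrongDual ℝ Y))
      rw [hψdef, norm_smul, norm_inv, Real.norm_eq_abs, abs_of_pos hφn, inv_mul_cancel₀ hφn.ne']
    -- construct the sequence
    have hseq : ∀ n : ℕ, ∃ x : Y, ‖x‖ ≤ 1 ∧ 2 - 3/(n+1) ≤ ‖ψ + ιY x‖ := by
      intro n
      have hε : (0:ℝ) < 1/(n+1) := by positivity
      have h1 : (1:ℝ) - 1/(n+1) < ‖ψ‖ := by rw [hψ]; linarith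
      obtain ⟨f, hf1, hf2⟩ := ContinuousLinearMap.exists_lt_apply_of_lt_opNorm ψ h1
      -- fix the sign of f
      obtain ⟨g, hg1, hg2⟩ : ∃ g : Y →L[ℝ] ℝ, ‖g‖ ≤ 1 ∧ 1 - 1/(n+1) < ψ g := by
        rcases le_or_gt 0 (ψ f) with hs | hs
        · exact ⟨f, hf1.le, by rwa [Real.norm_eq_abs, abs_of_nonneg hs] at hf2⟩
        · refine ⟨-f, by simpa using hf1.le, ?_⟩
          rw [map_neg]
          rwa [Real.norm_eq_abs, abs_of_neg hs] at hf2
      -- find the point in the ball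
      have h2 : ψ g - 1/(n+1) < ‖g‖ := by
        have : ψ g ≤ ‖ψ‖ * ‖g‖ := le_trans (le_abs_self _) (ψ.le_opNorm g)
        rw [hψ, one_mul] at this
        linarith
      obtain ⟨x0, hx1, hx2⟩ := ContinuousLinearMap.exists_lt_apply_of_lt_opNorm g h2
      obtain ⟨x, hxn, hxv⟩ : ∃ x : Y, ‖x‖ ≤ 1 ∧ ψ g - 1/(n+1) < g x := by
        rcases le_or_gt 0 (g x0) with hs | hs
        · exact ⟨x0, hx1.le, by rwa [Real.norm_eq_abs, abs_of_nonneg hs] at hx2⟩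
        · refine ⟨-x0, by simpa using hx1.le, ?_⟩
          rw [map_neg]
          rwa [Real.norm_eq_abs, abs_of_neg hs] at hx2
      refine ⟨x, hxn, ?_⟩
      have hval : 2 - 3/(n+1) < (ψ + ιY x) g := by
        have : (ψ + ιY x) g = ψ g + g x := by
          simp [hιY, NormedSpace.inclusionInDoubleDual]
        rw [this]
        have h3 : (3:ℝ)/(n+1) = 1/(n+1) + 1/(n+1) + 1/(n+1) := by ring
        linarith
      have hle : (ψ + ιY x) g ≤ ‖ψ + ιY x‖ := by
        calc (ψ + ιY x) g ≤ |((ψ + ιY x) g)| := le_abs_self _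
          _ ≤ ‖ψ + ιY x‖ * ‖g‖ := (ψ + ιY x).le_opNorm g
          _ ≤ ‖ψ + ιY x‖ * 1 := by
              exact mul_le_mul_of_nonneg_left hg1 (ContinuousLinearMap.opNorm_nonneg _)
          _ = ‖ψ + ιY x‖ := mul_one _
      linarith
    choose x hx1 hx2 using hseq
    set φs : ℕ → (Y →L[ℝ] ℝ) →L[ℝ] ℝ := fun n => ιY (x n) with hφs
    have hφsn : ∀ n, ‖φs n‖ ≤ 1 := fun n =>
      le_trans (NormedSpace.double_dual_bound ℝ Y (x n)) (hx1 n)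
    have htend : Tendsto (fun n => ‖ψ + φs n‖) atTop (𝓝 2) := by
      have hlo : Tendsto (fun n : ℕ => 2 - 3/((n:ℝ)+1)) atTop (𝓝 2) := by
        have : Tendsto (fun n : ℕ => 3/((n:ℝ)+1)) atTop (𝓝 0) := by
          have := tendsto_one_div_add_atTop_nhds_zero_nat (𝕜 := ℝ)
          have h3 := this.const_mul (3:ℝ)
          simpa [div_eq_mul_inv, one_div, mul_comm] using h3
        have := (tendsto_const_nhds (x := (2:ℝ)) (f := atTop (α := ℕ))).sub this
        simpa using this
      refine tendsto_of_tendsto_of_tendsto_of_le_of_le hlo tendsto_const_nhds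
        (fun n => hx2 n) (fun n => ?_)
      calc ‖ψ + φs n‖ ≤ ‖ψ‖ + ‖φs n‖ := ContinuousLinearMap.opNorm_add_le _ _
        _ ≤ 1 + 1 := by rw [hψ]; exact add_le_add le_rfl (hφsn n)
        _ = 2 := by norm_num
    have hweak := hLUR ψ hψ φs hφsn htend
    -- ψ belongs to the closed range of ιY
    have hmem : ψ ∈ Set.range ιY := by
      by_contra hnot
      set S : Submodule ℝ ((Y →L[ℝ] ℝ) →L[ℝ] ℝ) := LinearMap.range (ιY : Y →ₗ[ℝ] ((Y →L[ℝ] ℝ) →L[ℝ] ℝ)) with hS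
      have hmemS : ψ ∉ (S : Set (((Y →L[ℝ] ℝ) →L[ℝ] ℝ))) := by
        simpa [hS, LinearMap.mem_range] using hnot
      have hclosed : IsClosed (S : Set (((Y →L[ℝ] ℝ) →L[ℝ] ℝ))) := by
        have hiso : Isometry ιY :=
          (NormedSpace.inclusionInDoubleDualLi ℝ (E := Y)).isometry
        have h2 : IsClosed (Set.range ιY) := hiso.isClosedEmbedding.isClosed_range
        have h3 : (S : Set (((Y →L[ℝ] ℝ) →L[ℝ] ℝ))) = Set.range ιY := by
          ext z; simp [hS, LinearMap.mem_range, Set.mem_range]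
        rw [h3]; exact h2
      obtain ⟨G, u, hGψ, hGb⟩ :=
        geometric_hahn_banach_point_closed (Submodule.convex S) hclosed hmemS
      have hu0 : u < 0 := by simpa using hGb 0 (Submodule.zero_mem S)
      have hGzero : ∀ n, G (φs n) = 0 := by
        intro n
        by_contra hne
        have hmem' : ∀ c : ℝ, c • φs n ∈ S := fun c =>
          Submodule.smul_mem S c ⟨x n, rfl⟩
        have := hGb (((u-1)/G (φs n)) • φs n) (hmem' _)
        rw [map_smul, smul_eq_mul, div_mul_cancel₀ _ hne] at this
        linarith
      have hlim := hweak G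
      have : Tendsto (fun _ : ℕ => (0:ℝ)) atTop (𝓝 (G ψ)) := by
        simpa [hGzero] using hlim
      have hGψ0 : G ψ = 0 := tendsto_nhds_unique this tendsto_const_nhds
      linarith
    obtain ⟨y, hy⟩ := hmem
    refine ⟨‖φ‖ • y, ?_⟩
    rw [map_smul, hy, hψdef, smul_inv_smul₀ hφn.ne']
  -- Step 2: transfer surjectivity along the isomorphism
  set d : (X →L[ℝ] ℝ) ≃L[ℝ] (Y →L[ℝ] ℝ) :=
    e.arrowCongr (ContinuousLinearEquiv.refl ℝ ℝ) with hd
  set dd : ((X →L[ℝ] ℝ) →L[ℝ] ℝ) ≃L[ℝ] ((Y →L[ℝ] ℝ) →L[ℝ] ℝ) :=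
    d.arrowCongr (ContinuousLinearEquiv.refl ℝ ℝ) with hdd
  have hkey : ∀ x : X, dd (NormedSpace.inclusionInDoubleDual ℝ X x) = ιY (e x) := by
    intro x
    ext f
    rfl
  intro φ
  obtain ⟨y, hy⟩ := hY (dd φ)
  refine ⟨e.symm y, ?_⟩
  apply dd.injective
  rw [hkey, e.apply_symm_apply, hy]
end

section
/- Let X be a real Banach space. Define Λ ⊆ S_{X**} as the set of φ ∈ S_{X**} such that for every sequence (φ_n) ⊆ S_{X**} with sup_n ‖φ + φ_n‖ = 2 one has φ ∈ closed span of {φ_n : n ∈ ℕ}. If the closed linear span of Λ equals X**, then X is reflexive. -/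
open Filter Topology

set_option maxHeartbeats 1000000

/-- Port helper: in current Mathlib instance search no longer finds `ContinuousAdd` for the
bidual `(X →L[ℝ] ℝ) →L[ℝ] ℝ` (a `Prop`-valued class, so this changes no meaning). -/
instance continuousAdd_bidual_port {X : Type*} [NormedAddCommGroup X] [NormedSpace ℝ X] :
    ContinuousAdd ((X →L[ℝ] ℝ) →L[ℝ] ℝ) := by
  have := (inferInstance : IsTopologicalAddGroup ((X →L[ℝ] ℝ) →L[ℝ] ℝ))
  exact this.toContinuousAdd

/-- If the closed linear span of
`Λ = {φ ∈ S_{X**} : ∀ (φ_n) ⊆ S_{X**}, sup_n ‖φ + φ_n‖ = 2 → φ ∈ [φ_n]}`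
is all of `X**`, then `X` is reflexive. -/
theorem reflexive_of_span_Lambda
    {X : Type*} [NormedAddCommGroup X] [NormedSpace ℝ X] [CompleteSpace X]
    (h : (Submodule.span ℝ
        {φ : (X →L[ℝ] ℝ) →L[ℝ] ℝ | ‖φ‖ = 1 ∧
          ∀ φs : ℕ → (X →L[ℝ] ℝ) →L[ℝ] ℝ, (∀ n, ‖φs n‖ = 1) →
            (⨆ n, ‖φ + φs n‖) = 2 →
            φ ∈ (Submodule.span ℝ (Set.range φs)).topologicalClosure}).topologicalClosure
      = ⊤) :
    Function.Surjective (NormedSpace.inclusionInDoubleDual ℝ X) := by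
  set ι := NormedSpace.inclusionInDoubleDual ℝ X with hιdef
  have hiso : Isometry ι := (NormedSpace.inclusionInDoubleDualLi ℝ (E := X)).isometry
  have hnormι : ∀ x : X, ‖ι x‖ = ‖x‖ := fun x =>
    (NormedSpace.inclusionInDoubleDualLi ℝ (E := X)).norm_map x
  set R : Submodule ℝ ((X →L[ℝ] ℝ) →L[ℝ] ℝ) := LinearMap.range (ι : X →ₗ[ℝ] ((X →L[ℝ] ℝ) →L[ℝ] ℝ)) with hRdef
  have hRclosed : IsClosed (R : Set ((X →L[ℝ] ℝ) →L[ℝ] ℝ)) := by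
    have : (R : Set ((X →L[ℝ] ℝ) →L[ℝ] ℝ)) = Set.range ι := LinearMap.coe_range (ι : X →ₗ[ℝ] ((X →L[ℝ] ℝ) →L[ℝ] ℝ))
    rw [this]
    exact hiso.isClosedEmbedding.isClosed_range
  -- main step: Λ ⊆ R
  have hΛsub : {φ : (X →L[ℝ] ℝ) →L[ℝ] ℝ | ‖φ‖ = 1 ∧
      ∀ φs : ℕ → (X →L[ℝ] ℝ) →L[ℝ] ℝ, (∀ n, ‖φs n‖ = 1) →
        (⨆ n, ‖φ + φs n‖) = 2 →
        φ ∈ (Submodule.span ℝ (Set.range φs)).topologicalClosure} ⊆ (R : Set _) := by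
    rintro φ ⟨hφ1, hφ2⟩
    have key : ∀ n : ℕ, ∃ y : X, ‖y‖ = 1 ∧ 2 - 1 / (n + 1) ≤ ‖φ + ι y‖ := by
      intro n
      set c : ℝ := 1 - 1 / (2 * (n + 1)) with hc
      clear_value c
      have hn1 : (0:ℝ) < (n:ℝ) + 1 := by positivity
      have hc0 : 0 < c := by
        have : 1 / (2 * ((n:ℝ) + 1)) ≤ 1 / 2 := by
          apply one_div_le_one_div_of_le <;> nlinarith
        simp only [hc]; linarith
      have hc1 : c < ‖φ‖ := by
        rw [hφ1]; simp only [hc]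
        have : 0 < 1 / (2 * ((n:ℝ) + 1)) := by positivity
        linarith
      obtain ⟨f, hf, hφf⟩ := φ.exists_lt_apply_of_lt_opNorm hc1
      -- pick sign so that φ g > c
      obtain ⟨g, hg, hφg⟩ : ∃ g : X →L[ℝ] ℝ, ‖g‖ < 1 ∧ c < φ g := by
        rw [Real.norm_eq_abs] at hφf
        rcases lt_abs.mp hφf with h' | h'
        · exact ⟨f, hf, h'⟩
        · refine ⟨-f, by rwa [norm_neg], ?_⟩
          rwa [map_neg]
      have hcg : c < ‖g‖ := by
        have h1 : φ g ≤ ‖φ‖ * ‖g‖ := (le_abs_self _).trans (φ.le_opNorm g)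
        rw [hφ1, one_mul] at h1
        linarith
      obtain ⟨x, hx, hgx⟩ := g.exists_lt_apply_of_lt_opNorm hcg
      obtain ⟨z, hz, hgz⟩ : ∃ z : X, ‖z‖ < 1 ∧ c < g z := by
        rw [Real.norm_eq_abs] at hgx
        rcases lt_abs.mp hgx with h' | h'
        · exact ⟨x, hx, h'⟩
        · refine ⟨-x, by rwa [norm_neg], ?_⟩
          rwa [map_neg]
      have hz0 : z ≠ 0 := by
        rintro rfl; rw [map_zero] at hgz; linarith
      have hznorm : 0 < ‖z‖ := norm_pos_iff.mpr hz0
      refine ⟨‖z‖⁻¹ • z, ?_, ?_⟩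
      · rw [norm_smul, norm_inv, norm_norm, inv_mul_cancel₀ hznorm.ne']
      · have hgy : c < g (‖z‖⁻¹ • z) := by
          rw [map_smul, smul_eq_mul]
          have h1 : (1:ℝ) ≤ ‖z‖⁻¹ := (one_le_inv₀ hznorm).mpr hz.le
          calc c < g z := hgz
            _ = 1 * g z := (one_mul _).symm
            _ ≤ ‖z‖⁻¹ * g z := mul_le_mul_of_nonneg_right h1 (le_of_lt (hc0.trans hgz))
        have h2c : 2 - 1 / ((n:ℝ) + 1) = 2 * c := by
          simp only [hc]; field_simp
        rw [h2c]
        have happ : (φ + ι (‖z‖⁻¹ • z)) g = φ g + g (‖z‖⁻¹ • z) := rfl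
        have h1 : ‖(φ + ι (‖z‖⁻¹ • z)) g‖ ≤ ‖φ + ι (‖z‖⁻¹ • z)‖ * ‖g‖ :=
          (φ + ι (‖z‖⁻¹ • z)).le_opNorm g
        have h2 : (φ + ι (‖z‖⁻¹ • z)) g ≤ ‖(φ + ι (‖z‖⁻¹ • z)) g‖ :=
          Real.le_norm_self _
        have h3 : (0:ℝ) ≤ ‖φ + ι (‖z‖⁻¹ • z)‖ := ContinuousLinearMap.opNorm_nonneg _
        have h4 : ‖φ + ι (‖z‖⁻¹ • z)‖ * ‖g‖ ≤ ‖φ + ι (‖z‖⁻¹ • z)‖ * 1 :=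
          mul_le_mul_of_nonneg_left hg.le h3
        rw [happ] at h1 h2
        rw [Real.norm_eq_abs] at h1 h2
        have h5 : |φ g + g (‖z‖⁻¹ • z)| ≤ ‖φ + ι (‖z‖⁻¹ • z)‖ * 1 := h1.trans h4
        rw [mul_one] at h5
        have h6 : 2 * c ≤ φ g + g (‖z‖⁻¹ • z) := by linarith
        exact h6.trans (h2.trans h5)
    choose y hy1 hy2 using key
    set φs : ℕ → (X →L[ℝ] ℝ) →L[ℝ] ℝ := fun n => ι (y n) with hφs
    have hnorms : ∀ n, ‖φs n‖ = 1 := fun n => by rw [hφs]; rw [hnormι, hy1 n]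
    have hub : ∀ n, ‖φ + φs n‖ ≤ 2 := fun n => by
      have := ContinuousLinearMap.opNorm_add_le φ (φs n)
      rw [hφ1, hnorms n] at this
      linarith
    have hbdd : BddAbove (Set.range fun n => ‖φ + φs n‖) := by
      refine ⟨2, ?_⟩; rintro _ ⟨n, rfl⟩; exact hub n
    have hsup : (⨆ n, ‖φ + φs n‖) = 2 := by
      refine le_antisymm (ciSup_le hub) ?_
      have hlim : Tendsto (fun n : ℕ => 2 - 1 / ((n:ℝ) + 1)) atTop (𝓝 2) := by
        have := tendsto_one_div_add_atTop_nhds_zero_nat (𝕜 := ℝ)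
        have h2 := (tendsto_const_nhds (x := (2:ℝ)) (f := atTop)).sub this
        simpa using h2
      refine le_of_tendsto' hlim fun n => ?_
      exact (hy2 n).trans (le_ciSup hbdd n)
    have hmem := hφ2 φs hnorms hsup
    have hle : (Submodule.span ℝ (Set.range φs)).topologicalClosure ≤ R := by
      rw [← hRclosed.submodule_topologicalClosure_eq]
      apply Submodule.topologicalClosure_mono
      rw [Submodule.span_le]
      rintro _ ⟨n, rfl⟩
      exact ⟨y n, rfl⟩
    exact hle hmem
  have hR : R = ⊤ := by
    refine top_unique ?_
    rw [← h, ← hRclosed.submodule_topologicalClosure_eq]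
    exact Submodule.topologicalClosure_mono (Submodule.span_le.mpr hΛsub)
  intro ψ
  have : ψ ∈ R := hR ▸ Submodule.mem_top
  obtain ⟨x, hx⟩ := this
  exact ⟨x, hx⟩
end

section
/- Let X be a real Banach space and x ∈ S_X a ω-strongly extreme point. Suppose x'_n, x''_n ∈ B_X and λ_n ∈ [0,1] with λ_n → λ ∈ (0,1], and λ_n x'_n + (1 − λ_n) x''_n → x in norm. Then x'_n converges weakly to x. -/
open Filter Topology

/-- If `x ∈ S_X` is ω-strongly extreme, `x'_n, x''_n ∈ B_X`, `λ_n ∈ [0,1]`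
with `λ_n → λ ∈ (0,1]` and `λ_n x'_n + (1-λ_n) x''_n → x` in norm, then `x'_n → x` weakly. -/
theorem omega_strongly_extreme_convex_combination
    {X : Type*} [NormedAddCommGroup X] [NormedSpace ℝ X] [CompleteSpace X]
    (x : X) (hx : ‖x‖ = 1)
    (hse : ∀ zs ys : ℕ → X, (∀ n, ‖zs n‖ ≤ 1) → (∀ n, ‖ys n‖ ≤ 1) →
      Tendsto (fun n => (2 : ℝ)⁻¹ • (zs n + ys n)) atTop (𝓝 x) →
      ∀ g : X →L[ℝ] ℝ, Tendsto (fun n => g (zs n - ys n)) atTop (𝓝 0))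
    (x' x'' : ℕ → X) (hx' : ∀ n, ‖x' n‖ ≤ 1) (hx'' : ∀ n, ‖x'' n‖ ≤ 1)
    (lam : ℕ → ℝ) (hlam : ∀ n, lam n ∈ Set.Icc (0 : ℝ) 1)
    (l : ℝ) (hl : l ∈ Set.Ioc (0 : ℝ) 1) (hlamlim : Tendsto lam atTop (𝓝 l))
    (hconv : Tendsto (fun n => lam n • x' n + (1 - lam n) • x'' n) atTop (𝓝 x)) :
    ∀ g : X →L[ℝ] ℝ, Tendsto (fun n => g (x' n)) atTop (𝓝 (g x)) := by
  intro g
  set u : ℕ → X := fun n => lam n • x' n + (1 - lam n) • x'' n with hu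
  have hxid : ∀ n, x' n = u n + (1 - lam n) • (x' n - x'' n) := by
    intro n
    simp only [hu, smul_sub, sub_smul, one_smul]
    abel
  by_cases hl1 : l = 1
  · -- norm convergence case
    have hdiff : Tendsto (fun n => x' n - u n) atTop (𝓝 0) := by
      have hb : ∀ n, ‖x' n - u n‖ ≤ 2 * (1 - lam n) := by
        intro n
        have h1 : x' n - u n = (1 - lam n) • (x' n - x'' n) := by
          simp only [hu]; module
        rw [h1, norm_smul, Real.norm_eq_abs,
          abs_of_nonneg (by linarith [(hlam n).2])]
        have : ‖x' n - x'' n‖ ≤ 2 := by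
          calc ‖x' n - x'' n‖ ≤ ‖x' n‖ + ‖x'' n‖ := norm_sub_le _ _
            _ ≤ 2 := by linarith [hx' n, hx'' n]
        nlinarith [(hlam n).2, norm_nonneg (x' n - x'' n)]
      have hlim : Tendsto (fun n => 2 * (1 - lam n)) atTop (𝓝 0) := by
        have : Tendsto (fun n => 2 * (1 - lam n)) atTop (𝓝 (2 * (1 - l))) :=
          (tendsto_const_nhds.sub hlamlim).const_mul 2
        simpa [hl1] using this
      exact squeeze_zero_norm hb hlim
    have hnorm : Tendsto x' atTop (𝓝 x) := by
      have := hdiff.add hconv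
      simpa using this
    exact ((g.continuous.tendsto x).comp hnorm)
  · have hl' : l < 1 := lt_of_le_of_ne hl.2 hl1
    set s : ℕ → ℝ := fun n => min (lam n) (1 - lam n) with hs
    have hs0 : ∀ n, 0 ≤ s n := fun n =>
      le_min (hlam n).1 (by linarith [(hlam n).2])
    set zs : ℕ → X := fun n => u n + s n • (x' n - x'' n) with hzs
    set ys : ℕ → X := fun n => u n - s n • (x' n - x'' n) with hys
    have hzsb : ∀ n, ‖zs n‖ ≤ 1 := by
      intro n
      have h1 : zs n = (lam n + s n) • x' n + (1 - lam n - s n) • x'' n := by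
        simp only [hzs, hu, smul_sub, add_smul, sub_smul]
        abel
      have hc1 : 0 ≤ lam n + s n := by linarith [(hlam n).1, hs0 n]
      have hc2 : 0 ≤ 1 - lam n - s n := by
        have := min_le_right (lam n) (1 - lam n); linarith
      calc ‖zs n‖ ≤ ‖(lam n + s n) • x' n‖ + ‖(1 - lam n - s n) • x'' n‖ := by
            rw [h1]; exact norm_add_le _ _
        _ ≤ (lam n + s n) * 1 + (1 - lam n - s n) * 1 := by
            gcongr
            · rw [norm_smul, Real.norm_eq_abs, abs_of_nonneg hc1]
              exact mul_le_mul_of_nonneg_left (hx' n) hc1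
            · rw [norm_smul, Real.norm_eq_abs, abs_of_nonneg hc2]
              exact mul_le_mul_of_nonneg_left (hx'' n) hc2
        _ = 1 := by ring
    have hysb : ∀ n, ‖ys n‖ ≤ 1 := by
      intro n
      have h1 : ys n = (lam n - s n) • x' n + (1 - lam n + s n) • x'' n := by
        simp only [hys, hu, smul_sub, add_smul, sub_smul]
        abel
      have hc1 : 0 ≤ lam n - s n := by
        have := min_le_left (lam n) (1 - lam n); linarith
      have hc2 : 0 ≤ 1 - lam n + s n := by linarith [(hlam n).2, hs0 n]
      calc ‖ys n‖ ≤ ‖(lam n - s n) • x' n‖ + ‖(1 - lam n + s n) • x'' n‖ := by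
            rw [h1]; exact norm_add_le _ _
        _ ≤ (lam n - s n) * 1 + (1 - lam n + s n) * 1 := by
            gcongr
            · rw [norm_smul, Real.norm_eq_abs, abs_of_nonneg hc1]
              exact mul_le_mul_of_nonneg_left (hx' n) hc1
            · rw [norm_smul, Real.norm_eq_abs, abs_of_nonneg hc2]
              exact mul_le_mul_of_nonneg_left (hx'' n) hc2
        _ = 1 := by ring
    have hmid : Tendsto (fun n => (2 : ℝ)⁻¹ • (zs n + ys n)) atTop (𝓝 x) := by
      have heq : ∀ n, (2 : ℝ)⁻¹ • (zs n + ys n) = u n := by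
        intro n
        have : zs n + ys n = (2 : ℝ) • u n := by
          simp only [hzs, hys, two_smul]; abel
        rw [this, smul_smul]; norm_num
      simpa only [heq] using hconv
    have key := hse zs ys hzsb hysb hmid g
    have hslim : Tendsto s atTop (𝓝 (min l (1 - l))) :=
      hlamlim.min (tendsto_const_nhds.sub hlamlim)
    have hε : 0 < min l (1 - l) := lt_min hl.1 (by linarith)
    have hgdiff : Tendsto (fun n => g (x' n - x'' n)) atTop (𝓝 0) := by
      have hinv : Tendsto (fun n => (2 * s n)⁻¹) atTop (𝓝 (2 * min l (1 - l))⁻¹) :=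
        (Tendsto.const_mul 2 hslim).inv₀ (by positivity)
      have h2 : Tendsto (fun n => (2 * s n)⁻¹ * g (zs n - ys n)) atTop (𝓝 0) := by
        simpa using hinv.mul key
      have hev : ∀ᶠ n in atTop, (2 * s n)⁻¹ * g (zs n - ys n) = g (x' n - x'' n) := by
        filter_upwards [hslim.eventually (eventually_gt_nhds hε)] with n hn
        have hsne : (2 * s n) ≠ 0 := by positivity
        have hzy : zs n - ys n = (2 * s n) • (x' n - x'' n) := by
          simp only [hzs, hys, two_mul, add_smul]; abel
        rw [hzy, map_smul, smul_eq_mul]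
        field_simp
      exact (Tendsto.congr' hev h2)
    have hgu : Tendsto (fun n => g (u n)) atTop (𝓝 (g x)) :=
      (g.continuous.tendsto x).comp hconv
    have hfin : Tendsto (fun n => g (u n) + (1 - lam n) * g (x' n - x'' n))
        atTop (𝓝 (g x + (1 - l) * 0)) :=
      hgu.add ((tendsto_const_nhds.sub hlamlim).mul hgdiff)
    have heq : ∀ n, g (u n) + (1 - lam n) * g (x' n - x'' n) = g (x' n) := by
      intro n
      conv_rhs => rw [hxid n]
      simp only [hu, map_add, map_sub, map_smul, smul_eq_mul]
    simpa only [heq, add_zero, mul_zero] using hfin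
end

section
/- Let X be a real Banach space, x ∈ S_X a ω-strongly extreme point, and {x_n : n ∈ ℕ} ⊆ B_X a set with x in the closed convex hull of {x_n}. Then x lies in the weak closure of {x_n : n ∈ ℕ}. -/
open Filter Topology

/-- Every element of the convex hull of the range of `xs : ℕ → X` is a finite convex
combination indexed by a `Finset ℕ`. -/
lemma exists_finset_rep_aux {X : Type*} [AddCommGroup X] [Module ℝ X]
    (xs : ℕ → X) (c : X) (h : c ∈ convexHull ℝ (Set.range xs)) :
    ∃ (F : Finset ℕ) (w : ℕ → ℝ), (∀ n, 0 ≤ w n) ∧ ∑ n ∈ F, w n = 1 ∧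
      ∑ n ∈ F, w n • xs n = c := by
  classical
  rw [convexHull_eq] at h
  obtain ⟨ι, t, w, z, hw0, hw1, hz, hc⟩ := h
  have hz' : ∀ i : ι, ∃ n : ℕ, i ∈ t → xs n = z i := by
    intro i
    by_cases hi : i ∈ t
    · obtain ⟨n, hn⟩ := hz i hi
      exact ⟨n, fun _ => hn⟩
    · exact ⟨0, fun h => absurd h hi⟩
  choose ν hν using hz'
  refine ⟨t.image ν, fun n => ∑ i ∈ t.filter (fun i => ν i = n), w i, ?_, ?_, ?_⟩
  · intro n
    exact Finset.sum_nonneg fun i hi => hw0 i (Finset.mem_filter.1 hi).1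
  · rw [Finset.sum_fiberwise_of_maps_to (fun i hi => Finset.mem_image_of_mem ν hi) w]
    exact hw1
  · have key : ∀ n ∈ t.image ν,
        (∑ i ∈ t.filter (fun i => ν i = n), w i) • xs n
          = ∑ i ∈ t.filter (fun i => ν i = n), w i • z i := by
      intro n hn
      rw [Finset.sum_smul]
      refine Finset.sum_congr rfl fun i hi => ?_
      obtain ⟨hit, hin⟩ := Finset.mem_filter.1 hi
      rw [← hν i hit, hin]
    rw [Finset.sum_congr rfl key,
      Finset.sum_fiberwise_of_maps_to (fun i hi => Finset.mem_image_of_mem ν hi)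
        (fun i => w i • z i)]
    rw [← hc, Finset.centerMass_eq_of_sum_1 _ _ hw1]

/-- If `x ∈ S_X` is ω-strongly extreme and lies in the closed convex hull of
`{x_n} ⊆ B_X`, then `x` lies in the weak closure of `{x_n}`. -/
theorem omega_strongly_extreme_mem_weak_closure
    {X : Type*} [NormedAddCommGroup X] [NormedSpace ℝ X] [CompleteSpace X]
    (x : X) (hx : ‖x‖ = 1)
    (hse : ∀ zs ys : ℕ → X, (∀ n, ‖zs n‖ ≤ 1) → (∀ n, ‖ys n‖ ≤ 1) →
      Tendsto (fun n => (2 : ℝ)⁻¹ • (zs n + ys n)) atTop (𝓝 x) →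
      ∀ g : X →L[ℝ] ℝ, Tendsto (fun n => g (zs n - ys n)) atTop (𝓝 0))
    (xs : ℕ → X) (hxs : ∀ n, ‖xs n‖ ≤ 1)
    (hhull : x ∈ closure (convexHull ℝ (Set.range xs))) :
    toWeakSpace ℝ X x ∈ closure (toWeakSpace ℝ X '' Set.range xs) := by
  classical
  -- Key finitary claim
  have key : ∀ (G : Finset (X →L[ℝ] ℝ)) (δ : (X →L[ℝ] ℝ) → ℝ), (∀ g ∈ G, 0 < δ g) →
      ∃ n : ℕ, ∀ g ∈ G, |g (xs n) - g x| < δ g := by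
    intro G δ hδ
    by_contra hcon
    push_neg at hcon
    -- pick for each n an offending functional with a sign
    have hPex : ∀ n : ℕ, ∃ q : (X →L[ℝ] ℝ) × ℝ, q ∈ G ×ˢ ({1, -1} : Finset ℝ) ∧
        δ q.1 ≤ q.2 * (q.1 (xs n) - q.1 x) := by
      intro n
      obtain ⟨g, hg, hge⟩ := hcon n
      rcases le_or_gt 0 (g (xs n) - g x) with h | h
      · refine ⟨(g, 1), Finset.mem_product.2 ⟨hg, by simp⟩, ?_⟩
        rw [one_mul]
        rwa [abs_of_nonneg h] at hge
      · refine ⟨(g, -1), Finset.mem_product.2 ⟨hg, by simp⟩, ?_⟩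
        rw [neg_one_mul]
        rwa [abs_of_neg h] at hge
    choose P hPmem hPkey using hPex
    -- a sequence of convex combinations converging to x
    obtain ⟨c, hc_mem, hc_tend⟩ := mem_closure_iff_seq_limit.mp hhull
    choose F w hw0 hw1 hwc using fun m => exists_finset_rep_aux xs (c m) (hc_mem m)
    set pairs : Finset ((X →L[ℝ] ℝ) × ℝ) := G ×ˢ ({1, -1} : Finset ℝ) with hpairs
    set K : ℕ := pairs.card with hK
    have hKpos : 0 < (K : ℝ) := by
      have : pairs.Nonempty := ⟨P 0, hPmem 0⟩
      exact_mod_cast Finset.card_pos.2 this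
    -- pigeonhole: some pair carries mass ≥ 1/K in the m-th combination
    have hmass : ∀ m : ℕ, ∃ q ∈ pairs,
        (K : ℝ)⁻¹ ≤ ∑ n ∈ (F m).filter (fun n => P n = q), w m n := by
      intro m
      by_contra hmc
      push_neg at hmc
      have hsum : ∑ q ∈ pairs, ∑ n ∈ (F m).filter (fun n => P n = q), w m n
          = ∑ n ∈ F m, w m n :=
        Finset.sum_fiberwise_of_maps_to (fun n _ => hPmem n) _
      have hlt : ∑ q ∈ pairs, ∑ n ∈ (F m).filter (fun n => P n = q), w m n
          < ∑ _q ∈ pairs, (K : ℝ)⁻¹ :=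
        Finset.sum_lt_sum_of_nonempty ⟨P 0, hPmem 0⟩ fun q hq => hmc q hq
      rw [hsum, hw1 m, Finset.sum_const, nsmul_eq_mul, ← hK,
        mul_inv_cancel₀ (ne_of_gt hKpos)] at hlt
      exact lt_irrefl _ hlt
    choose pm hpm_mem hpm_mass using hmass
    -- infinite pigeonhole: a fixed pair works for infinitely many m
    have hfib : ∃ y : {q // q ∈ pairs},
        Set.Infinite {m : ℕ | (⟨pm m, hpm_mem m⟩ : {q // q ∈ pairs}) = y} := by
      obtain ⟨y, hy⟩ := Finite.exists_infinite_fiber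
        (fun m : ℕ => (⟨pm m, hpm_mem m⟩ : {q // q ∈ pairs}))
      refine ⟨y, ?_⟩
      rw [← Set.infinite_coe_iff]
      exact hy
    obtain ⟨⟨p, hp⟩, hinf⟩ := hfib
    obtain ⟨φ, hφmono, hφ⟩ := Filter.extraction_of_frequently_atTop
      (Nat.frequently_atTop_iff_infinite.2 hinf)
    have hφp : ∀ k, pm (φ k) = p := fun k => congrArg Subtype.val (hφ k)
    have hgG : p.1 ∈ G := (Finset.mem_product.1 hp).1
    have hσ1 : |p.2| = 1 := by
      have h2 := (Finset.mem_product.1 hp).2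
      rcases Finset.mem_insert.1 h2 with h | h
      · rw [h]; simp
      · rw [Finset.mem_singleton] at h; rw [h]; simp
    have hδg : 0 < δ p.1 := hδ p.1 hgG
    -- abbreviations along the subsequence
    set d : ℕ → ℝ := fun n => if P n = p then 1 else 0 with hd
    set a : ℕ → ℝ := fun k => ∑ n ∈ (F (φ k)).filter (fun n => P n = p), w (φ k) n with ha
    set u : ℕ → ℝ := fun n => p.2 * (p.1 (xs n) - p.1 x) with hu
    have ha_low : ∀ k, (K : ℝ)⁻¹ ≤ a k := by
      intro k
      have h1 := hpm_mass (φ k)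
      rwa [hφp k] at h1
    have ha_nonneg : ∀ k, 0 ≤ a k := fun k => le_trans (inv_nonneg.2 hKpos.le) (ha_low k)
    have ha_le : ∀ k, a k ≤ 1 := by
      intro k
      calc a k ≤ ∑ n ∈ F (φ k), w (φ k) n :=
            Finset.sum_le_sum_of_subset_of_nonneg (Finset.filter_subset _ _)
              (fun n hn _ => hw0 (φ k) n)
        _ = 1 := hw1 (φ k)
    have hd0 : ∀ n, 0 ≤ d n := by
      intro n; by_cases h : P n = p <;> simp [hd, h]
    have hd1 : ∀ n, d n ≤ 1 := by
      intro n; by_cases h : P n = p <;> simp [hd, h]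
    have hsum_d : ∀ k (f : ℕ → ℝ), ∑ n ∈ F (φ k), w (φ k) n * d n * f n
        = ∑ n ∈ (F (φ k)).filter (fun n => P n = p), w (φ k) n * f n := by
      intro k f
      rw [Finset.sum_filter]
      refine Finset.sum_congr rfl fun n _ => ?_
      by_cases h : P n = p <;> simp [hd, h]
    have hsum_d1 : ∀ k, ∑ n ∈ F (φ k), w (φ k) n * d n = a k := by
      intro k
      simp only [ha]
      rw [Finset.sum_filter]
      refine Finset.sum_congr rfl fun n _ => ?_
      by_cases h : P n = p <;> simp [hd, h]
    set zs : ℕ → X := fun k => ∑ n ∈ F (φ k), (w (φ k) n * (1 + d n - a k)) • xs n with hzs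
    set ys : ℕ → X := fun k => ∑ n ∈ F (φ k), (w (φ k) n * (1 - d n + a k)) • xs n with hys
    -- norm bounds
    have hnorm : ∀ (e : ℕ → ℕ → ℝ), (∀ k n, 0 ≤ e k n) →
        (∀ k, ∑ n ∈ F (φ k), w (φ k) n * e k n = 1) →
        ∀ k, ‖∑ n ∈ F (φ k), (w (φ k) n * e k n) • xs n‖ ≤ 1 := by
      intro e he hes k
      calc ‖∑ n ∈ F (φ k), (w (φ k) n * e k n) • xs n‖
          ≤ ∑ n ∈ F (φ k), ‖(w (φ k) n * e k n) • xs n‖ := norm_sum_le _ _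
        _ ≤ ∑ n ∈ F (φ k), w (φ k) n * e k n := by
            refine Finset.sum_le_sum fun n hn => ?_
            rw [norm_smul, Real.norm_eq_abs,
              abs_of_nonneg (mul_nonneg (hw0 (φ k) n) (he k n))]
            calc w (φ k) n * e k n * ‖xs n‖ ≤ w (φ k) n * e k n * 1 :=
                  mul_le_mul_of_nonneg_left (hxs n) (mul_nonneg (hw0 (φ k) n) (he k n))
              _ = w (φ k) n * e k n := mul_one _
        _ = 1 := hes k
    have hcoefsum : ∀ k (b : ℝ) (s : ℝ), ∑ n ∈ F (φ k), w (φ k) n * (b + s * d n - s * a k)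
        = b + s * a k - s * a k := by
      intro k b s
      have h1 : ∀ n ∈ F (φ k), w (φ k) n * (b + s * d n - s * a k)
          = b * w (φ k) n + s * (w (φ k) n * d n) - (s * a k) * w (φ k) n := by
        intro n _; ring
      rw [Finset.sum_congr rfl h1, Finset.sum_sub_distrib, Finset.sum_add_distrib,
        ← Finset.mul_sum, ← Finset.mul_sum, ← Finset.mul_sum, hw1 (φ k), hsum_d1 k]
      ring
    have hz_norm : ∀ k, ‖zs k‖ ≤ 1 := by
      refine hnorm (fun k n => 1 + d n - a k) (fun k n => by
        show (0:ℝ) ≤ 1 + d n - a k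
        have h1 := hd0 n; have h2 := ha_le k; linarith) (fun k => ?_)
      have h1 := hcoefsum k 1 1
      simpa using h1
    have hy_norm : ∀ k, ‖ys k‖ ≤ 1 := by
      refine hnorm (fun k n => 1 - d n + a k) (fun k n => by
        show (0:ℝ) ≤ 1 - d n + a k
        have h1 := hd1 n; have h2 := ha_nonneg k; linarith) (fun k => ?_)
      have h1 := hcoefsum k 1 (-1)
      have h2 : ∀ n ∈ F (φ k), w (φ k) n * (1 - d n + a k)
          = w (φ k) n * (1 + (-1) * d n - (-1) * a k) := by intro n _; ring
      rw [Finset.sum_congr rfl h2, h1]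
      ring
    -- midpoint
    have hmid : ∀ k, (2 : ℝ)⁻¹ • (zs k + ys k) = c (φ k) := by
      intro k
      rw [hzs, hys, ← Finset.sum_add_distrib, Finset.smul_sum, ← hwc (φ k)]
      refine Finset.sum_congr rfl fun n hn => ?_
      rw [← add_smul, smul_smul]
      congr 1
      ring
    have hmid_t : Tendsto (fun k => (2 : ℝ)⁻¹ • (zs k + ys k)) atTop (𝓝 x) := by
      have h1 : (fun k => (2 : ℝ)⁻¹ • (zs k + ys k)) = fun k => c (φ k) := funext hmid
      rw [h1]
      exact hc_tend.comp hφmono.tendsto_atTop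
    -- the key tendsto from ω-strong extremality
    have h0 := hse zs ys hz_norm hy_norm hmid_t (p.2 • p.1)
    -- scalar computations
    have hgc : ∀ k, ∑ n ∈ F (φ k), w (φ k) n * p.1 (xs n) = p.1 (c (φ k)) := by
      intro k
      rw [← hwc (φ k), map_sum]
      exact Finset.sum_congr rfl fun n _ => by rw [map_smul, smul_eq_mul]
    have hgz : ∀ k, p.1 (zs k) = p.1 (c (φ k)) + (∑ n ∈ F (φ k), w (φ k) n * d n * p.1 (xs n))
        - a k * p.1 (c (φ k)) := by
      intro k
      rw [hzs, map_sum]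
      have h1 : ∀ n ∈ F (φ k), p.1 ((w (φ k) n * (1 + d n - a k)) • xs n)
          = w (φ k) n * p.1 (xs n) + w (φ k) n * d n * p.1 (xs n)
            - a k * (w (φ k) n * p.1 (xs n)) := by
        intro n _
        rw [map_smul, smul_eq_mul]
        ring
      rw [Finset.sum_congr rfl h1, Finset.sum_sub_distrib, Finset.sum_add_distrib,
        ← Finset.mul_sum, hgc k]
    have hgy : ∀ k, p.1 (ys k) = p.1 (c (φ k)) - (∑ n ∈ F (φ k), w (φ k) n * d n * p.1 (xs n))
        + a k * p.1 (c (φ k)) := by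
      intro k
      rw [hys, map_sum]
      have h1 : ∀ n ∈ F (φ k), p.1 ((w (φ k) n * (1 - d n + a k)) • xs n)
          = w (φ k) n * p.1 (xs n) - w (φ k) n * d n * p.1 (xs n)
            + a k * (w (φ k) n * p.1 (xs n)) := by
        intro n _
        rw [map_smul, smul_eq_mul]
        ring
      rw [Finset.sum_congr rfl h1, Finset.sum_add_distrib, Finset.sum_sub_distrib,
        ← Finset.mul_sum, hgc k]
    have hus : ∀ k, ∑ n ∈ F (φ k), w (φ k) n * d n * u n
        = p.2 * (∑ n ∈ F (φ k), w (φ k) n * d n * p.1 (xs n)) - a k * (p.2 * p.1 x) := by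
      intro k
      have h1 : ∀ n ∈ F (φ k), w (φ k) n * d n * u n
          = p.2 * (w (φ k) n * d n * p.1 (xs n)) - (p.2 * p.1 x) * (w (φ k) n * d n) := by
        intro n _
        simp only [hu]
        ring
      rw [Finset.sum_congr rfl h1, Finset.sum_sub_distrib, ← Finset.mul_sum, ← Finset.mul_sum,
        hsum_d1 k]
      ring
    have hid : ∀ k, (p.2 • p.1) (zs k - ys k)
        = 2 * (∑ n ∈ F (φ k), w (φ k) n * d n * u n)
          - 2 * a k * (p.2 * (p.1 (c (φ k)) - p.1 x)) := by
      intro k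
      have e1 : (p.2 • p.1) (zs k - ys k) = p.2 * (p.1 (zs k) - p.1 (ys k)) := by
        rw [map_sub]
        simp [smul_eq_mul, mul_sub]
      rw [e1, hgz k, hgy k, hus k]
      ring
    -- lower bound for the d-weighted sum
    have hSu : ∀ k, δ p.1 * a k ≤ ∑ n ∈ F (φ k), w (φ k) n * d n * u n := by
      intro k
      rw [hsum_d k u]
      have h1 : δ p.1 * a k = ∑ n ∈ (F (φ k)).filter (fun n => P n = p), δ p.1 * w (φ k) n := by
        rw [← Finset.mul_sum]
      rw [h1]
      refine Finset.sum_le_sum fun n hn => ?_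
      obtain ⟨hnF, hnp⟩ := Finset.mem_filter.1 hn
      have h2 := hPkey n
      rw [hnp] at h2
      have hwn := hw0 (φ k) n
      calc δ p.1 * w (φ k) n = w (φ k) n * δ p.1 := mul_comm _ _
        _ ≤ w (φ k) n * u n := mul_le_mul_of_nonneg_left h2 hwn
    -- eventual contradiction
    have hBpos : 0 < δ p.1 * (K : ℝ)⁻¹ := mul_pos hδg (inv_pos.2 hKpos)
    have hev1 : ∀ᶠ k in atTop, (p.2 • p.1) (zs k - ys k) < δ p.1 * (K : ℝ)⁻¹ :=
      h0.eventually_lt_const hBpos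
    have hev2 : ∀ᶠ k in atTop, |p.1 (c (φ k)) - p.1 x| < δ p.1 / 2 := by
      have hc' : Tendsto (fun k => c (φ k)) atTop (𝓝 x) := hc_tend.comp hφmono.tendsto_atTop
      have h1 : Tendsto (fun k => p.1 (c (φ k)) - p.1 x) atTop (𝓝 (p.1 x - p.1 x)) :=
        ((p.1.continuous.tendsto x).comp hc').sub tendsto_const_nhds
      rw [sub_self] at h1
      have h2 := h1.abs
      rw [abs_zero] at h2
      exact h2.eventually_lt_const (by linarith)
    obtain ⟨k, hk1, hk2⟩ := (hev1.and hev2).exists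
    have hσb : p.2 * (p.1 (c (φ k)) - p.1 x) ≤ |p.1 (c (φ k)) - p.1 x| := by
      calc p.2 * (p.1 (c (φ k)) - p.1 x) ≤ |p.2 * (p.1 (c (φ k)) - p.1 x)| := le_abs_self _
        _ = |p.2| * |p.1 (c (φ k)) - p.1 x| := abs_mul _ _
        _ = |p.1 (c (φ k)) - p.1 x| := by rw [hσ1, one_mul]
    have hf1 := hSu k
    have hf2 : a k * (p.2 * (p.1 (c (φ k)) - p.1 x)) ≤ a k * |p.1 (c (φ k)) - p.1 x| :=
      mul_le_mul_of_nonneg_left hσb (ha_nonneg k)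
    have hf3 : a k * |p.1 (c (φ k)) - p.1 x| ≤ a k * (δ p.1 / 2) :=
      mul_le_mul_of_nonneg_left hk2.le (ha_nonneg k)
    have hf4 : δ p.1 * (K : ℝ)⁻¹ ≤ δ p.1 * a k :=
      mul_le_mul_of_nonneg_left (ha_low k) hδg.le
    have hfinal : δ p.1 * (K : ℝ)⁻¹ ≤ (p.2 • p.1) (zs k - ys k) := by
      rw [hid k]
      linarith
    exact absurd hk1 (not_lt.2 hfinal)
  -- topological plumbing: reduce weak-closure membership to the finitary claim
  rw [mem_closure_iff_nhds]
  intro U hU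
  have heq : (𝓝 (toWeakSpace ℝ X x) : Filter (WeakSpace ℝ X))
      = Filter.comap (fun (z : WeakSpace ℝ X) (h : X →L[ℝ] ℝ) => (topDualPairing ℝ X).flip z h)
        (𝓝 (fun h : X →L[ℝ] ℝ => (topDualPairing ℝ X).flip (toWeakSpace ℝ X x) h)) :=
    nhds_induced _ _
  rw [heq] at hU
  obtain ⟨V, hV, hVU⟩ := Filter.mem_comap.1 hU
  rw [nhds_pi] at hV
  obtain ⟨I, hIfin, t, ht, hsub⟩ := Filter.mem_pi.1 hV
  choose ε hεpos hεsub using fun i => Metric.mem_nhds_iff.1 (ht i)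
  obtain ⟨n, hn⟩ := key hIfin.toFinset ε (fun i _ => hεpos i)
  refine ⟨toWeakSpace ℝ X (xs n), hVU ?_, ⟨xs n, Set.mem_range_self n, rfl⟩⟩
  apply hsub
  intro i hi
  apply hεsub i
  rw [Metric.mem_ball, Real.dist_eq]
  exact hn i (hIfin.mem_toFinset.2 hi)
end

section
/- Let X be a real Banach space and J : S_X → P(S_{X*}) the duality mapping J(x) = {x* ∈ S_{X*} : x*(x) = 1}, and NA(S_{X*}) = J(S_X) the norm-attaining functionals. The following are equivalent: (1) for each relatively open nonempty U ⊆ S_X, J(U) contains an interior point relative to NA(S_{X*}); (2) for each subset A dense in NA(S_{X*}), the set {x ∈ S_X : J(x) ∩ A ≠ ∅} is dense in S_X. -/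
open Filter Topology

variable {X : Type*} [NormedAddCommGroup X] [NormedSpace ℝ X] [CompleteSpace X]

/-- The duality mapping `J(x) = {f ∈ S_{X*} : f x = 1}`. -/
def dualityMap (x : X) : Set (X →L[ℝ] ℝ) := {f | ‖f‖ = 1 ∧ f x = 1}

/-- `J(A) = ⋃_{x ∈ A} J(x)`. -/
def dualityImage (A : Set X) : Set (X →L[ℝ] ℝ) := ⋃ x ∈ A, dualityMap x

/-- The norm-attaining unit functionals `NA(S_{X*}) = J(S_X)`. -/
def normAttaining (X : Type*) [NormedAddCommGroup X] [NormedSpace ℝ X] :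
    Set (X →L[ℝ] ℝ) := {f | ‖f‖ = 1 ∧ ∃ x : X, ‖x‖ = 1 ∧ f x = 1}

/-- (1) for each relatively open nonempty `U ⊆ S_X`, `J(U)` has an interior
point relative to `NA(S_{X*})` iff (2) for each `A` dense in `NA(S_{X*})`, the set
`{x ∈ S_X : J(x) ∩ A ≠ ∅}` is dense in `S_X`. -/
theorem duality_map_star_equivalence :
    (∀ U : Set X, U ⊆ {y : X | ‖y‖ = 1} →
        (∃ V : Set X, IsOpen V ∧ U = V ∩ {y : X | ‖y‖ = 1}) → U.Nonempty →
        ∃ f ∈ dualityImage U, ∃ ε > (0 : ℝ),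
          ∀ g ∈ normAttaining X, ‖g - f‖ < ε → g ∈ dualityImage U)
    ↔
    (∀ A : Set (X →L[ℝ] ℝ), A ⊆ normAttaining X →
        normAttaining X ⊆ closure A →
        {x : X | ‖x‖ = 1} ⊆ closure {x : X | ‖x‖ = 1 ∧ (dualityMap x ∩ A).Nonempty}) := by
  constructor
  · intro h1 A hA hdense x hx
    rw [Metric.mem_closure_iff]
    intro ε hε
    obtain ⟨f, hfU, δ, hδ, hball⟩ := h1 (Metric.ball x ε ∩ {y : X | ‖y‖ = 1})
      Set.inter_subset_right ⟨Metric.ball x ε, Metric.isOpen_ball, rfl⟩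
      ⟨x, Metric.mem_ball_self hε, hx⟩
    obtain ⟨y, hyU, hfy⟩ : ∃ y ∈ Metric.ball x ε ∩ {y : X | ‖y‖ = 1}, f ∈ dualityMap y := by
      simpa [dualityImage] using hfU
    have hfNA : f ∈ normAttaining X := ⟨hfy.1, y, hyU.2, hfy.2⟩
    have hf' := hdense hfNA
    rw [Metric.mem_closure_iff] at hf'
    obtain ⟨g, hgA, hgf⟩ := hf' δ hδ
    have hgJU : g ∈ dualityImage (Metric.ball x ε ∩ {y : X | ‖y‖ = 1}) :=
      hball g (hA hgA) (by rwa [← dist_eq_norm, dist_comm])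
    obtain ⟨z, hzU, hgz⟩ : ∃ z ∈ Metric.ball x ε ∩ {y : X | ‖y‖ = 1}, g ∈ dualityMap z := by
      simpa [dualityImage] using hgJU
    exact ⟨z, ⟨hzU.2, g, hgz, hgA⟩, by rw [dist_comm]; exact hzU.1⟩
  · rintro h2 U hUsub ⟨V, hV, hUV⟩ ⟨x₀, hx₀⟩
    by_contra hcon
    push_neg at hcon
    have hdense : normAttaining X ⊆ closure (normAttaining X \ dualityImage U) := by
      intro f hf
      by_cases hfU : f ∈ dualityImage U
      · rw [Metric.mem_closure_iff]
        intro ε hε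
        obtain ⟨g, hgNA, hgf, hgU⟩ := hcon f hfU ε hε
        exact ⟨g, ⟨hgNA, hgU⟩, by rw [dist_comm, dist_eq_norm]; exact hgf⟩
      · exact subset_closure ⟨hf, hfU⟩
    have hcl := h2 (normAttaining X \ dualityImage U) Set.diff_subset hdense (hUsub hx₀)
    have hx₀V : x₀ ∈ V := (hUV ▸ hx₀).1
    obtain ⟨y, hyV, hy1, g, hgJ, -, hgU⟩ := (_root_.mem_closure_iff.mp hcl) V hV hx₀V
    exact hgU (Set.mem_biUnion (show y ∈ U from hUV ▸ ⟨hyV, hy1⟩) hgJ)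
end

section
/- Let X be a real Banach space whose strongly exposed points of B_X are dense in S_X. Then X satisfies condition (∗): for every A dense in NA(S_{X*}), the set {x ∈ S_X : J(x) ∩ A ≠ ∅} is dense in S_X. -/
open Filter Topology

variable {X : Type*} [NormedAddCommGroup X] [NormedSpace ℝ X] [CompleteSpace X]

/-- `x` is strongly exposed by some unit functional. -/
def StronglyExposed (x : X) : Prop :=
  ∃ f : X →L[ℝ] ℝ, ‖f‖ = 1 ∧ f x = 1 ∧
    ∀ xs : ℕ → X, (∀ n, ‖xs n‖ ≤ 1) →
      Tendsto (fun n => f (xs n)) atTop (𝓝 1) →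
      Tendsto xs atTop (𝓝 x)

/-- If the strongly exposed points of `B_X` are dense in `S_X`, then `X`
satisfies condition (∗). -/
theorem star_of_dense_strongly_exposed
    (hdense : {x : X | ‖x‖ = 1} ⊆ closure {x : X | ‖x‖ = 1 ∧ StronglyExposed x}) :
    ∀ A : Set (X →L[ℝ] ℝ), A ⊆ normAttaining X →
      normAttaining X ⊆ closure A →
      {x : X | ‖x‖ = 1} ⊆ closure {x : X | ‖x‖ = 1 ∧ (dualityMap x ∩ A).Nonempty} := by
  intro A hAsub hAdense x hx
  rw [Metric.mem_closure_iff]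
  intro ε hε
  -- find a strongly exposed point y close to x
  obtain ⟨y, hy, hxy⟩ := Metric.mem_closure_iff.1 (hdense hx) (ε / 2) (by linarith)
  obtain ⟨hy1, f, hf1, hfy, hseq⟩ := hy
  -- key claim: quantitative strong exposedness
  have key : ∃ η > 0, ∀ z : X, ‖z‖ ≤ 1 → 1 - η < f z → ‖z - y‖ < ε / 2 := by
    by_contra h
    push_neg at h
    have hch : ∀ n : ℕ, ∃ z : X, ‖z‖ ≤ 1 ∧ 1 - 1 / (n + 1 : ℝ) < f z ∧ ε / 2 ≤ ‖z - y‖ := by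
      intro n
      obtain ⟨z, hz1, hz2, hz3⟩ := h (1 / (n + 1 : ℝ)) (by positivity)
      exact ⟨z, hz1, hz2, hz3⟩
    choose zs hz1 hz2 hz3 using hch
    have hub : ∀ n, f (zs n) ≤ 1 := by
      intro n
      calc f (zs n) ≤ ‖f (zs n)‖ := le_abs_self _
        _ ≤ ‖f‖ * ‖zs n‖ := (f.le_opNorm _)
        _ ≤ 1 := by rw [hf1]; simpa using hz1 n
    have hlow : Tendsto (fun n : ℕ => 1 - 1 / (n + 1 : ℝ)) atTop (𝓝 1) := by
      have := tendsto_one_div_add_atTop_nhds_zero_nat (𝕜 := ℝ)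
      have h2 := (tendsto_const_nhds (x := (1 : ℝ))).sub this
      simpa using h2
    have hft : Tendsto (fun n => f (zs n)) atTop (𝓝 1) :=
      tendsto_of_tendsto_of_tendsto_of_le_of_le hlow tendsto_const_nhds
        (fun n => (hz2 n).le) hub
    have hzt : Tendsto zs atTop (𝓝 y) := hseq zs hz1 hft
    have : Tendsto (fun n => ‖zs n - y‖) atTop (𝓝 0) := by
      simpa using (tendsto_iff_norm_sub_tendsto_zero.1 hzt)
    obtain ⟨n, hn⟩ := (this.eventually (eventually_lt_nhds (by linarith : (0:ℝ) < ε / 2))).exists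
    exact absurd (hz3 n) (not_le.2 hn)
  obtain ⟨η, hη, hkey⟩ := key
  -- f is norm attaining, so approximate it by g ∈ A
  have hfNA : f ∈ normAttaining X := ⟨hf1, y, hy1, hfy⟩
  obtain ⟨g, hgA, hfg⟩ := Metric.mem_closure_iff.1 (hAdense hfNA) η hη
  obtain ⟨hg1, z, hz1, hgz⟩ := hAsub hgA
  -- f z is close to 1
  have hfz : 1 - η < f z := by
    have h1 : ‖f z - g z‖ ≤ ‖f - g‖ * ‖z‖ := (f - g).le_opNorm z
    rw [hz1, mul_one] at h1
    have h2 : ‖f - g‖ < η := by rwa [dist_eq_norm] at hfg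
    have h3 : |f z - g z| < η := lt_of_le_of_lt h1 h2
    have := abs_lt.1 h3
    linarith [this.1, hgz]
  have hzy : ‖z - y‖ < ε / 2 := hkey z hz1.le hfz
  refine ⟨z, ⟨hz1, g, ⟨hg1, hgz⟩, hgA⟩, ?_⟩
  calc dist x z ≤ dist x y + dist y z := dist_triangle _ _ _
    _ < ε / 2 + ε / 2 := by
        apply add_lt_add hxy
        rw [dist_eq_norm, norm_sub_rev]; exact hzy
    _ = ε := by ring
end

section
/- Let X be a real Banach space such that X* is an Asplund space and X satisfies condition (∗). Then the set of strongly exposed points of B_X is dense in S_X. -/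
open Filter Topology

set_option maxHeartbeats 4000000
set_option synthInstance.maxHeartbeats 1000000

variable {X : Type*} [NormedAddCommGroup X] [NormedSpace ℝ X] [CompleteSpace X]

/-- A Banach space is Asplund if every closed separable subspace has separable dual. -/
def IsAsplund (Z : Type*) [NormedAddCommGroup Z] [NormedSpace ℝ Z] : Prop :=
  ∀ Y : Subspace ℝ Z, IsClosed (Y : Set Z) →
    TopologicalSpace.SeparableSpace Y →
    TopologicalSpace.SeparableSpace (Y →L[ℝ] ℝ)

/-- The slice `{x ∈ B_X : g x > 1 - α}` has diameter at most `ε`. -/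
def SmallSlice (ε α : ℝ) (g : X →L[ℝ] ℝ) : Prop :=
  ∀ u v : X, ‖u‖ ≤ 1 → ‖v‖ ≤ 1 → 1 - α < g u → 1 - α < g v → dist u v ≤ ε

/-- Functionals with arbitrarily small slices are dense in the unit sphere of the dual. -/
def SliceNorming (X : Type*) [NormedAddCommGroup X] [NormedSpace ℝ X] : Prop :=
  ∀ g : X →L[ℝ] ℝ, ‖g‖ = 1 → ∀ ρ : ℝ, 0 < ρ → ∀ ε : ℝ, 0 < ε →
    ∃ g' : X →L[ℝ] ℝ, ‖g'‖ = 1 ∧ ‖g' - g‖ < ρ ∧ ∃ α : ℝ, 0 < α ∧ SmallSlice ε α g'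

noncomputable def posChild (g h : X →L[ℝ] ℝ) (t : ℝ) : X →L[ℝ] ℝ :=
  ‖g + t • h‖⁻¹ • (g + t • h)

lemma norm_smul_real (t : ℝ) (h : X →L[ℝ] ℝ) : ‖t • h‖ = |t| * ‖h‖ := by
  have := norm_smul t h
  rwa [Real.norm_eq_abs] at this

lemma posChild_norm_bounds {g h : X →L[ℝ] ℝ} (hg : ‖g‖ = 1) (hh : ‖h‖ = 1) {t : ℝ}
    (ht : 0 < t) (ht3 : t ≤ 1/3) :
    1 - t ≤ ‖g + t • h‖ ∧ ‖g + t • h‖ ≤ 1 + t := by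
  have hth : ‖t • h‖ = t := by
    rw [norm_smul_real, hh, abs_of_pos ht, mul_one]
  constructor
  · have h1 : ‖g‖ - ‖t • h‖ ≤ ‖g + t • h‖ := by
      have := norm_sub_norm_le g (-(t • h))
      simpa [sub_neg_eq_add] using this
    rw [hg, hth] at h1; linarith
  · have := norm_add_le g (t • h)
    rw [hg, hth] at this; linarith

lemma posChild_facts {g h : X →L[ℝ] ℝ} (hg : ‖g‖ = 1) (hh : ‖h‖ = 1) {t : ℝ}
    (ht : 0 < t) (ht3 : t ≤ 1/3) :
    ‖posChild g h t‖ = 1 ∧ ‖posChild g h t - g‖ ≤ 3 * t := by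
  obtain ⟨hw1, hw2⟩ := posChild_norm_bounds hg hh ht ht3
  set w := g + t • h with hw
  have hwpos : 0 < ‖w‖ := by linarith
  have hwne : ‖w‖ ≠ 0 := ne_of_gt hwpos
  constructor
  · rw [posChild, norm_smul_real, abs_of_pos (by positivity), inv_mul_cancel₀ hwne]
  · have key : posChild g h t - g = ‖w‖⁻¹ • (t • h + (1 - ‖w‖) • g) := by
      rw [posChild, ← hw]
      match_scalars <;> field_simp
    rw [key, norm_smul_real]
    have habs : |‖w‖⁻¹| = ‖w‖⁻¹ := abs_of_pos (by positivity)
    rw [habs]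
    have h2 : ‖t • h + (1 - ‖w‖) • g‖ ≤ t + |1 - ‖w‖| := by
      have := norm_add_le (t • h) ((1 - ‖w‖) • g)
      rw [norm_smul_real, norm_smul_real, hg, hh, abs_of_pos ht] at this
      simpa using this
    have h3 : |1 - ‖w‖| ≤ t := by
      rw [abs_le]; constructor <;> linarith
    have h4 : ‖w‖⁻¹ ≤ (1 - t)⁻¹ := by
      apply inv_anti₀ (by linarith) hw1
    calc ‖w‖⁻¹ * ‖t • h + (1 - ‖w‖) • g‖ ≤ (1-t)⁻¹ * (t + t) := by
          apply mul_le_mul h4 (by linarith) (norm_nonneg _) (by norm_num; linarith)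
      _ ≤ 3 * t := by
          rw [inv_mul_le_iff₀ (by linarith)]
          nlinarith

set_option maxHeartbeats 4000000 in
/-- Core estimate: points in small slices of the perturbed functional `posChild g h t`
have large `h`-value. -/
lemma posChild_slice_est {g h : X →L[ℝ] ℝ} (hg : ‖g‖ = 1) (hh : ‖h‖ = 1) {t α β : ℝ}
    (ht : 0 < t) (ht1 : t < 1) (hα : 0 < α) (hβ : 0 ≤ β) (hβ1 : β ≤ 1)
    {u x : X} (hu1 : ‖u‖ ≤ 1) (hu2 : 1 - α < g u) (hx1 : ‖x‖ ≤ 1)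
    (hx2 : 1 - β < posChild g h t x) :
    h u - (α + 2 * β) / t < h x := by
  set w := g + t • h with hw
  have hwth : ‖t • h‖ = t := by rw [norm_smul_real, hh, abs_of_pos ht, mul_one]
  have hwub : ‖w‖ ≤ 1 + t := by
    have := norm_add_le g (t • h); rw [hg, hwth] at this; linarith
  have hwlb : 1 - t ≤ ‖w‖ := by
    have h1 : ‖g‖ - ‖t • h‖ ≤ ‖g + t • h‖ := by
      have := norm_sub_norm_le g (-(t • h))
      simpa [sub_neg_eq_add] using this
    rw [hg, hwth] at h1; linarith
  have hwpos : 0 < ‖w‖ := by linarith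
  -- w u ≤ ‖w‖
  have hK3 : w u ≤ ‖w‖ := by
    calc w u ≤ |w u| := le_abs_self _
      _ ≤ ‖w‖ * ‖u‖ := w.le_opNorm u
      _ ≤ ‖w‖ := by nlinarith [norm_nonneg w]
  have hK4 : w u = g u + t * h u := by simp [hw]
  have hK5 : w x = g x + t * h x := by simp [hw]
  have hK6 : g x ≤ 1 := by
    calc g x ≤ |g x| := le_abs_self _
      _ ≤ ‖g‖ * ‖x‖ := g.le_opNorm x
      _ ≤ 1 := by rw [hg]; linarith
  have hx2' : posChild g h t x = ‖w‖⁻¹ * w x := by simp [posChild, hw, mul_add]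
  rw [hx2'] at hx2
  have hK7 : ‖w‖ * (1 - β) < w x := by
    have h5 := mul_lt_mul_of_pos_left hx2 hwpos
    rw [← mul_assoc, mul_inv_cancel₀ (ne_of_gt hwpos), one_mul] at h5
    linarith
  rw [mul_sub, mul_one] at hK7
  have hNβ : ‖w‖ * β ≤ (1 + t) * β := by nlinarith
  have hβ2 : (1 + t) * β ≤ 2 * β := by nlinarith
  -- combine
  have key : t * h u - α - 2*β < t * h x := by linarith
  have h10 : t * ((α + 2*β)/t) = α + 2*β := by field_simp
  have h11 : t * (h u - (α+2*β)/t) < t * (h x) := by rw [mul_sub, h10]; linarith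
  exact lt_of_mul_lt_mul_left h11 (le_of_lt ht)

/-- Tree of functionals: each node of the dyadic tree carries a unit functional;
children are normalized perturbations `±(t n) • h` of the parent. -/
noncomputable def treeNode (g₀ : X →L[ℝ] ℝ) (hf : (X →L[ℝ] ℝ) → ℕ → (X →L[ℝ] ℝ))
    (t : ℕ → ℝ) : List Bool → (X →L[ℝ] ℝ)
  | [] => g₀
  | b :: s => posChild (treeNode g₀ hf t s)
      (if b then -(hf (treeNode g₀ hf t s) s.length) else hf (treeNode g₀ hf t s) s.length)
      (t s.length)

lemma treeNode_nil (g₀ : X →L[ℝ] ℝ) (hf : (X →L[ℝ] ℝ) → ℕ → (X →L[ℝ] ℝ)) (t : ℕ → ℝ) :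
    treeNode g₀ hf t [] = g₀ := rfl

lemma treeNode_cons (g₀ : X →L[ℝ] ℝ) (hf : (X →L[ℝ] ℝ) → ℕ → (X →L[ℝ] ℝ)) (t : ℕ → ℝ)
    (b : Bool) (s : List Bool) :
    treeNode g₀ hf t (b :: s) = posChild (treeNode g₀ hf t s)
      (if b then -(hf (treeNode g₀ hf t s) s.length) else hf (treeNode g₀ hf t s) s.length)
      (t s.length) := rfl

/-- Finite prefixes of a branch `σ` (deepest entry first). -/
def branchPrefix (σ : ℕ → Bool) : ℕ → List Bool
  | 0 => []
  | n+1 => σ n :: branchPrefix σ n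

@[simp] lemma branchPrefix_length (σ : ℕ → Bool) (n : ℕ) : (branchPrefix σ n).length = n := by
  induction n with
  | zero => rfl
  | succ n ih => simp [branchPrefix, ih]

lemma branchPrefix_append (σ : ℕ → Bool) (n k : ℕ) :
    ∃ l : List Bool, branchPrefix σ (n + k) = l ++ branchPrefix σ n ∧ l.length = k := by
  induction k with
  | zero => exact ⟨[], rfl, rfl⟩
  | succ k ih =>
    obtain ⟨l, hl, hlen⟩ := ih
    exact ⟨σ (n + k) :: l, by simp [branchPrefix, hl], by simp [hlen]⟩

lemma branchPrefix_congr {σ τ : ℕ → Bool} {n : ℕ} (h : ∀ k < n, σ k = τ k) :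
    branchPrefix σ n = branchPrefix τ n := by
  induction n with
  | zero => rfl
  | succ n ih =>
    simp only [branchPrefix]
    rw [h n (Nat.lt_succ_self n), ih (fun k hk => h k (Nat.lt_succ_of_lt hk))]


noncomputable instance subspaceDualNormedAddCommGroup (Y : Subspace ℝ (X →L[ℝ] ℝ)) :
    NormedAddCommGroup Y := Submodule.normedAddCommGroup Y

noncomputable instance subspaceDualNormedSpace (Y : Subspace ℝ (X →L[ℝ] ℝ)) :
    NormedSpace ℝ Y := Submodule.normedSpace Y

/-- Restriction of the canonical embedding `X → X**` to a subspace `Y ⊆ X*`. -/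
noncomputable def restrDual (Y : Subspace ℝ (X →L[ℝ] ℝ)) (x : X) : ↥Y →L[ℝ] ℝ :=
  LinearMap.mkContinuous
    { toFun := fun f : ↥Y => (f : X →L[ℝ] ℝ) x
      map_add' := fun f g => by simp
      map_smul' := fun c f => by simp }
    ‖x‖ (fun f => by
      calc ‖(f : X →L[ℝ] ℝ) x‖ ≤ ‖(f : X →L[ℝ] ℝ)‖ * ‖x‖ :=
            (f : X →L[ℝ] ℝ).le_opNorm x
        _ = ‖x‖ * ‖f‖ := by rw [mul_comm]; norm_cast)

@[simp] lemma restrDual_apply (Y : Subspace ℝ (X →L[ℝ] ℝ)) (x : X) (f : ↥Y) :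
    restrDual Y x f = (f : X →L[ℝ] ℝ) x := rfl

lemma restrDual_norm_le (Y : Subspace ℝ (X →L[ℝ] ℝ)) (x : X) : ‖restrDual Y x‖ ≤ ‖x‖ :=
  LinearMap.mkContinuous_norm_le _ (norm_nonneg x) _

lemma clusterPt_mem_closed {Z : Type*} [TopologicalSpace Z] {u : ℕ → Z} {F : Z}
    (h : ClusterPt F (Filter.map u Filter.atTop)) {C : Set Z} (hC : IsClosed C)
    (hev : ∀ᶠ m in Filter.atTop, u m ∈ C) : F ∈ C := by
  have h2 : ClusterPt F (𝓟 C) :=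
    h.mono (Filter.le_principal_iff.mpr (Filter.mem_map.mpr hev))
  rw [← hC.closure_eq]
  exact mem_closure_iff_clusterPt.mpr h2

lemma sliceNorming_of_asplund (hA : IsAsplund (X →L[ℝ] ℝ)) : SliceNorming X := by
  by_contra hKS
  unfold SliceNorming SmallSlice at hKS
  push_neg at hKS
  obtain ⟨g₀, hg₀, ρ₀, hρ₀, ε, hε, H0⟩ := hKS
  -- ε < 2
  obtain ⟨u₂, v₂, hu₂, hv₂, -, -, hd₂⟩ := H0 g₀ hg₀ (by simpa using hρ₀) 1 one_pos
  have hε2 : ε < 2 := by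
    have : dist u₂ v₂ ≤ 2 := by
      rw [dist_eq_norm]
      calc ‖u₂ - v₂‖ ≤ ‖u₂‖ + ‖v₂‖ := norm_sub_le _ _
        _ ≤ 2 := by linarith
    linarith
  -- replace ρ₀ by ρ := min ρ₀ 1
  set ρ := min ρ₀ 1 with hρdef
  have hρ : 0 < ρ := lt_min hρ₀ one_pos
  have hρ1 : ρ ≤ 1 := min_le_right _ _
  have H : ∀ g' : X →L[ℝ] ℝ, ‖g'‖ = 1 → ‖g' - g₀‖ < ρ → ∀ α : ℝ, 0 < α →
      ∃ u v : X, ‖u‖ ≤ 1 ∧ ‖v‖ ≤ 1 ∧ 1 - α < g' u ∧ 1 - α < g' v ∧ ε < dist u v :=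
    fun g' h1 h2 α hα => H0 g' h1 (lt_of_lt_of_le h2 (min_le_left _ _)) α hα
  clear H0 hu₂ hv₂ hd₂ u₂ v₂ hρ₀
  -- constants
  set κ := ε / 1000 with hκdef
  have hκpos : 0 < κ := by positivity
  have hκhalf : κ ≤ 1 / 2 := by rw [hκdef]; linarith
  set t : ℕ → ℝ := fun n => ρ / 100 * κ ^ n with htdef
  have htpos : ∀ n, 0 < t n := fun n => by positivity
  have htsmall : ∀ n, t n ≤ 1 / 100 := by
    intro n
    have h1 : κ ^ n ≤ 1 := pow_le_one₀ (le_of_lt hκpos) (by linarith)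
    have h2 : ρ / 100 * κ ^ n ≤ ρ / 100 * 1 := by
      apply mul_le_mul_of_nonneg_left h1 (by positivity)
    simpa [htdef] using h2.trans (by linarith)
  have htsucc : ∀ n, t (n + 1) = κ * t n := by
    intro n; simp [htdef, pow_succ]; ring
  have hthalf : ∀ n, t (n + 1) ≤ t n / 2 := by
    intro n
    rw [htsucc n]
    calc κ * t n ≤ 1/2 * t n := by
          apply mul_le_mul_of_nonneg_right hκhalf (le_of_lt (htpos n))
      _ = t n / 2 := by ring
  have htmono : ∀ n m, n ≤ m → t m ≤ t n := by
    intro n m hnm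
    induction m with
    | zero => simp_all
    | succ m ih =>
      rcases Nat.lt_or_ge n (m+1) with h | h
      · have h2 := ih (Nat.lt_succ_iff.mp h)
        have := hthalf m
        have := htpos m
        linarith
      · have : n = m + 1 := le_antisymm hnm h
        simp [this]
  -- selection functions
  have Hsel : ∀ (g : X →L[ℝ] ℝ) (α : ℝ), ∃ uv : X × X,
      (‖g‖ = 1 ∧ ‖g - g₀‖ < ρ ∧ 0 < α) →
        ‖uv.1‖ ≤ 1 ∧ ‖uv.2‖ ≤ 1 ∧ 1 - α < g uv.1 ∧ 1 - α < g uv.2 ∧ ε < dist uv.1 uv.2 := by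
    intro g α
    by_cases hc : ‖g‖ = 1 ∧ ‖g - g₀‖ < ρ ∧ 0 < α
    · obtain ⟨u, v, h1, h2, h3, h4, h5⟩ := H g hc.1 hc.2.1 α hc.2.2
      exact ⟨(u, v), fun _ => ⟨h1, h2, h3, h4, h5⟩⟩
    · exact ⟨(0, 0), fun hcon => absurd hcon hc⟩
  choose UV hUV using Hsel
  have Hdv : ∀ p : X, ∃ h : X →L[ℝ] ℝ, p ≠ 0 → ‖h‖ = 1 ∧ h p = ‖p‖ := by
    intro p
    by_cases hp : p = 0
    · exact ⟨0, fun hcon => absurd hp hcon⟩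
    · obtain ⟨g, hg1, hg2⟩ := exists_dual_vector ℝ p (norm_ne_zero_iff.mpr hp)
      exact ⟨g, fun _ => ⟨hg1, by exact_mod_cast hg2⟩⟩
  choose DV hDV using Hdv
  set aα : ℕ → ℝ := fun n => t n * (ε / 100) with haαdef
  have haαpos : ∀ n, 0 < aα n := fun n => by
    have := htpos n; positivity
  set hfn : (X →L[ℝ] ℝ) → ℕ → (X →L[ℝ] ℝ) :=
    fun g n => DV ((UV g (aα n)).1 - (UV g (aα n)).2) with hfndef
  set N : List Bool → X →L[ℝ] ℝ := treeNode g₀ hfn t with hNdef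
  -- shorthand for per-node data
  set uPt : List Bool → X := fun s => (UV (N s) (aα s.length)).1 with huPtdef
  set vPt : List Bool → X := fun s => (UV (N s) (aα s.length)).2 with hvPtdef
  set hPt : List Bool → X →L[ℝ] ℝ := fun s => hfn (N s) s.length with hhPtdef
  have ht0 : t 0 = ρ / 100 := by simp [htdef]
  -- invariant: every node is a unit functional staying well inside the ball
  have Inv : ∀ s : List Bool, ‖N s‖ = 1 ∧ ‖N s - g₀‖ ≤ 6 * t 0 - 6 * t s.length := by
    intro s
    induction s with
    | nil =>
      refine ⟨by simpa [hNdef, treeNode_nil] using hg₀, ?_⟩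
      simp [hNdef, treeNode_nil]
    | cons b s ih =>
      obtain ⟨ih1, ih2⟩ := ih
      have hin : ‖N s - g₀‖ < ρ := by
        have h1 := htpos s.length
        rw [ht0] at ih2
        linarith
      have hgood := hUV (N s) (aα s.length) ⟨ih1, hin, haαpos _⟩
      obtain ⟨hu1, hv1, hu2, hv2, hd⟩ := hgood
      have hpne : (UV (N s) (aα s.length)).1 - (UV (N s) (aα s.length)).2 ≠ 0 := by
        rw [sub_ne_zero]
        intro hcon
        rw [hcon] at hd
        simp only [dist_self] at hd
        linarith
      have hdv := hDV _ hpne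
      have hh1 : ‖hPt s‖ = 1 := hdv.1
      have hhb : ‖(if b then -(hPt s) else (hPt s))‖ = 1 := by cases b <;> simp [hh1]
      have hstep := posChild_facts ih1 hhb (htpos s.length)
        (le_trans (htsmall s.length) (by norm_num))
      have hcons : N (b :: s) = posChild (N s)
          (if b then -(hPt s) else (hPt s)) (t s.length) := rfl
      rw [hcons]
      refine ⟨hstep.1, ?_⟩
      have htri : ‖posChild (N s) (if b then -(hPt s) else (hPt s)) (t s.length) - g₀‖ ≤
          ‖posChild (N s) (if b then -(hPt s) else (hPt s)) (t s.length) - N s‖ +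
          ‖N s - g₀‖ := norm_sub_le_norm_sub_add_norm_sub _ _ _
      have hlen : (b :: s).length = s.length + 1 := rfl
      rw [hlen]
      have := hthalf s.length
      have := hstep.2
      linarith
  -- goodness of each node
  have good : ∀ s : List Bool, ‖uPt s‖ ≤ 1 ∧ ‖vPt s‖ ≤ 1 ∧
      1 - aα s.length < N s (uPt s) ∧ 1 - aα s.length < N s (vPt s) ∧
      ε < dist (uPt s) (vPt s) := by
    intro s
    have hin : ‖N s - g₀‖ < ρ := by
      have h1 := htpos s.length
      have h2 := (Inv s).2
      rw [ht0] at h2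
      linarith
    exact hUV (N s) (aα s.length) ⟨(Inv s).1, hin, haαpos _⟩
  have hPtfacts : ∀ s : List Bool, ‖hPt s‖ = 1 ∧ hPt s (uPt s - vPt s) = ‖uPt s - vPt s‖ := by
    intro s
    have hd := (good s).2.2.2.2
    have hpne : uPt s - vPt s ≠ 0 := by
      rw [sub_ne_zero]
      intro hcon
      rw [hcon] at hd
      simp only [dist_self] at hd
      linarith
    exact hDV _ hpne
  -- step bound
  have stepBound : ∀ (s : List Bool) (b : Bool), ‖N (b :: s) - N s‖ ≤ 3 * t s.length := by
    intro s b
    have hhb : ‖(if b then -(hPt s) else (hPt s))‖ = 1 := by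
      cases b <;> simp [(hPtfacts s).1]
    have hstep := posChild_facts (Inv s).1 hhb (htpos s.length)
      (le_trans (htsmall s.length) (by norm_num))
    have hcons : N (b :: s) = posChild (N s)
        (if b then -(hPt s) else (hPt s)) (t s.length) := rfl
    rw [hcons]
    exact hstep.2
  -- chain bound
  have chainBound : ∀ (l s : List Bool),
      ‖N (l ++ s) - N s‖ ≤ 6 * t s.length - 6 * t (l.length + s.length) := by
    intro l s
    induction l with
    | nil => simp
    | cons b l ih =>
      have h1 : ((b :: l) ++ s) = b :: (l ++ s) := rfl
      have h2 := stepBound (l ++ s) b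
      have h3 : (l ++ s).length = l.length + s.length := List.length_append
      rw [h3] at h2
      have htri : ‖N (b :: (l ++ s)) - N s‖ ≤
          ‖N (b :: (l ++ s)) - N (l ++ s)‖ + ‖N (l ++ s) - N s‖ :=
        norm_sub_le_norm_sub_add_norm_sub _ _ _
      have h4 := hthalf (l.length + s.length)
      have h5 : (b :: l).length + s.length = (l.length + s.length) + 1 := by
        simp [List.length_cons]; ring
      rw [h1, h5]
      linarith
  -- numeric bound used in both descent estimates
  have numBound : ∀ (n m : ℕ), n + 1 ≤ m →
      (aα n + 2 * (aα m + (6 * t (n+1) - 6 * t m))) / t n ≤ ε / 20 := by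
    intro n m hnm
    rw [div_le_iff₀ (htpos n)]
    have h1 : t m ≤ t n := htmono n m (le_trans (Nat.le_succ n) hnm)
    have h2 : t (n+1) = κ * t n := htsucc n
    have h3 : 0 ≤ t m := le_of_lt (htpos m)
    have h4 : t m * (ε/100) ≤ t n * (ε/100) :=
      mul_le_mul_of_nonneg_right h1 (by positivity)
    have h5 : aα n = t n * (ε/100) := rfl
    have h6 : aα m = t m * (ε/100) := rfl
    rw [h5, h6, h2, hκdef]
    nlinarith [htpos n, hε, mul_pos (htpos n) hε]
  have betaBound : ∀ (n m : ℕ), n + 1 ≤ m → 0 ≤ aα m + (6 * t (n+1) - 6 * t m) ∧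
      aα m + (6 * t (n+1) - 6 * t m) ≤ 1 := by
    intro n m hnm
    have h1 := htsmall m
    have h2 := htsmall (n+1)
    have h3 := htpos m
    have h4 := htpos (n+1)
    have h6 : aα m = t m * (ε/100) := rfl
    have h7 : t m ≤ t (n+1) := htmono (n+1) m hnm
    constructor
    · nlinarith
    · nlinarith
  -- value transfer between a node and its descendants
  have valTrans : ∀ (l r : List Bool) (x : X), ‖x‖ ≤ 1 →
      1 - aα (l ++ r).length < N (l ++ r) x →
      1 - (aα (l ++ r).length + (6 * t r.length - 6 * t (l.length + r.length))) < N r x := by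
    intro l r x hx1 hx2
    have hchain := chainBound l r
    have h2 : (N (l ++ r) - N r) x ≤ ‖N (l ++ r) - N r‖ := by
      calc (N (l ++ r) - N r) x ≤ |(N (l ++ r) - N r) x| := le_abs_self _
        _ ≤ ‖N (l ++ r) - N r‖ * ‖x‖ := (N (l ++ r) - N r).le_opNorm x
        _ ≤ ‖N (l ++ r) - N r‖ := by
            nlinarith [norm_nonneg (N (l ++ r) - N r)]
    have h1 : (N (l ++ r) - N r) x = N (l ++ r) x - N r x := by simp
    linarith
  -- descent estimates
  have descF : ∀ (s l : List Bool) (x : X), ‖x‖ ≤ 1 →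
      1 - aα (l ++ false :: s).length < N (l ++ false :: s) x →
      hPt s (uPt s) - ε / 20 < hPt s x := by
    intro s l x hx1 hx2
    have hlen1 : (false :: s).length = s.length + 1 := rfl
    have hlen2 : (l ++ false :: s).length = l.length + (s.length + 1) := by
      simp [List.length_append]
    have hval := valTrans l (false :: s) x hx1 hx2
    rw [hlen1, hlen2] at hval
    set n := s.length with hn
    set m := l.length + (n + 1) with hm
    set β := aα m + (6 * t (n+1) - 6 * t m) with hβ
    have hβfacts := betaBound n m (by omega)
    have hcons : N (false :: s) = posChild (N s) (hPt s) (t n) := rfl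
    rw [hcons] at hval
    have hcore := posChild_slice_est (Inv s).1 (hPtfacts s).1 (htpos n)
      (lt_of_le_of_lt (htsmall n) (by norm_num)) (haαpos n) hβfacts.1 hβfacts.2
      (good s).1 (good s).2.2.1 hx1 hval
    have hnum := numBound n m (by omega)
    have hq : 0 < t n := htpos n
    have h8 : (aα n + 2 * β) / t n ≤ ε / 20 := hnum
    linarith
  have descT : ∀ (s l : List Bool) (x : X), ‖x‖ ≤ 1 →
      1 - aα (l ++ true :: s).length < N (l ++ true :: s) x →
      hPt s x < hPt s (vPt s) + ε / 20 := by
    intro s l x hx1 hx2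
    have hlen1 : (true :: s).length = s.length + 1 := rfl
    have hlen2 : (l ++ true :: s).length = l.length + (s.length + 1) := by
      simp [List.length_append]
    have hval := valTrans l (true :: s) x hx1 hx2
    rw [hlen1, hlen2] at hval
    set n := s.length with hn
    set m := l.length + (n + 1) with hm
    set β := aα m + (6 * t (n+1) - 6 * t m) with hβ
    have hβfacts := betaBound n m (by omega)
    have hcons : N (true :: s) = posChild (N s) (-(hPt s)) (t n) := rfl
    rw [hcons] at hval
    have hneg : ‖-(hPt s)‖ = 1 := by simp [(hPtfacts s).1]
    have hvgood : 1 - aα n < N s (vPt s) := (good s).2.2.2.1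
    have hcore := posChild_slice_est (Inv s).1 hneg (htpos n)
      (lt_of_le_of_lt (htsmall n) (by norm_num)) (haαpos n) hβfacts.1 hβfacts.2
      (good s).2.1 hvgood hx1 hval
    simp only [ContinuousLinearMap.neg_apply] at hcore
    have hnum := numBound n m (by omega)
    linarith
  classical
  -- the separable closed subspace Y of X*
  set hset : Set (X →L[ℝ] ℝ) := Set.range hPt with hsetdef
  set Y : Subspace ℝ (X →L[ℝ] ℝ) := (Submodule.span ℝ hset).topologicalClosure with hYdef
  have hYc : IsClosed (Y : Set (X →L[ℝ] ℝ)) := Submodule.isClosed_topologicalClosure _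
  have hYsep : TopologicalSpace.SeparableSpace ↥Y := by
    have h1 : hset.Countable := Set.countable_range _
    have h2 : TopologicalSpace.IsSeparable
        ((Submodule.span ℝ hset : Submodule ℝ (X →L[ℝ] ℝ)) : Set (X →L[ℝ] ℝ)) :=
      h1.isSeparable.span
    have h3 : TopologicalSpace.IsSeparable (Y : Set (X →L[ℝ] ℝ)) := by
      rw [hYdef, Submodule.topologicalClosure_coe]
      exact TopologicalSpace.isSeparable_closure.mpr h2
    exact h3.separableSpace
  have hYdual := hA Y hYc hYsep
  have hmem : ∀ s : List Bool, hPt s ∈ Y := fun s =>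
    Submodule.le_topologicalClosure _ (Submodule.subset_span ⟨s, rfl⟩)
  set hY : List Bool → ↥Y := fun s => ⟨hPt s, hmem s⟩ with hYmapdef
  have hYnorm : ∀ s, ‖hY s‖ = 1 := fun s => (hPtfacts s).1
  -- branch vectors and their weak-* cluster points
  set xB : (ℕ → Bool) → ℕ → X := fun σ m => uPt (branchPrefix σ m) with hxBdef
  set q : (ℕ → Bool) → ℕ → WeakDual ℝ ↥Y :=
    fun σ m => StrongDual.toWeakDual (restrDual Y (xB σ m)) with hqdef
  set K : Set (WeakDual ℝ ↥Y) := WeakDual.toStrongDual ⁻¹' Metric.closedBall 0 1 with hKdef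
  have hK : IsCompact K := WeakDual.isCompact_closedBall (𝕜 := ℝ) (E := ↥Y) 0 1
  have hqK : ∀ σ m, q σ m ∈ K := by
    intro σ m
    have h1 : ‖restrDual Y (xB σ m)‖ ≤ 1 :=
      le_trans (restrDual_norm_le Y (xB σ m)) (good (branchPrefix σ m)).1
    simp only [hKdef, Set.mem_preimage, Metric.mem_closedBall, dist_zero_right]
    exact h1
  have hcl : ∀ σ : ℕ → Bool, ∃ F ∈ K, ClusterPt F (Filter.map (q σ) Filter.atTop) := by
    intro σ
    exact hK.exists_clusterPt
      (Filter.le_principal_iff.mpr (Filter.mem_map.mpr (Filter.Eventually.of_forall (hqK σ))))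
  choose F hFK hFcl using hcl
  -- evaluation bounds for cluster points
  have evalF_lower : ∀ (σ : ℕ → Bool) (n : ℕ), σ n = false →
      hPt (branchPrefix σ n) (uPt (branchPrefix σ n)) - ε / 20 ≤
        F σ (hY (branchPrefix σ n)) := by
    intro σ n hσn
    set s := branchPrefix σ n with hsdef
    have hC : IsClosed {G : WeakDual ℝ ↥Y | hPt s (uPt s) - ε/20 ≤ G (hY s)} :=
      isClosed_le continuous_const (WeakDual.eval_continuous _)
    refine clusterPt_mem_closed (hFcl σ) hC ?_
    rw [Filter.eventually_atTop]
    refine ⟨n+1, fun m hm => ?_⟩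
    obtain ⟨l, hl, hlen⟩ := branchPrefix_append σ (n+1) (m - (n+1))
    have hmm : (n+1) + (m - (n+1)) = m := by omega
    rw [hmm] at hl
    have hl2 : branchPrefix σ m = l ++ false :: s := by
      rw [hl, hsdef]
      congr 1
      simp [branchPrefix, hσn]
    have hkey := descF s l (uPt (l ++ false :: s)) (good _).1 (good _).2.2.1
    have hev : q σ m (hY s) = hPt s (uPt (branchPrefix σ m)) := rfl
    show hPt s (uPt s) - ε/20 ≤ q σ m (hY s)
    rw [hev, hl2]
    linarith
  have evalF_upper : ∀ (σ : ℕ → Bool) (n : ℕ), σ n = true →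
      F σ (hY (branchPrefix σ n)) ≤
        hPt (branchPrefix σ n) (vPt (branchPrefix σ n)) + ε / 20 := by
    intro σ n hσn
    set s := branchPrefix σ n with hsdef
    have hC : IsClosed {G : WeakDual ℝ ↥Y | G (hY s) ≤ hPt s (vPt s) + ε/20} :=
      isClosed_le (WeakDual.eval_continuous _) continuous_const
    refine clusterPt_mem_closed (hFcl σ) hC ?_
    rw [Filter.eventually_atTop]
    refine ⟨n+1, fun m hm => ?_⟩
    obtain ⟨l, hl, hlen⟩ := branchPrefix_append σ (n+1) (m - (n+1))
    have hmm : (n+1) + (m - (n+1)) = m := by omega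
    rw [hmm] at hl
    have hl2 : branchPrefix σ m = l ++ true :: s := by
      rw [hl, hsdef]
      congr 1
      simp [branchPrefix, hσn]
    have hkey := descT s l (uPt (l ++ true :: s)) (good _).1 (good _).2.2.1
    have hev : q σ m (hY s) = hPt s (uPt (branchPrefix σ m)) := rfl
    show q σ m (hY s) ≤ hPt s (vPt s) + ε/20
    rw [hev, hl2]
    linarith
  -- separation of distinct branch limits
  have sep : ∀ σ τ : ℕ → Bool, σ ≠ τ →
      ε/2 ≤ ‖WeakDual.toStrongDual (F σ) - WeakDual.toStrongDual (F τ)‖ := by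
    intro σ τ hστ
    have hne : ∃ k, σ k ≠ τ k := by
      by_contra hcon
      push_neg at hcon
      exact hστ (funext hcon)
    have hn : σ (Nat.find hne) ≠ τ (Nat.find hne) := Nat.find_spec hne
    set n := Nat.find hne with hndef
    have hagree : ∀ k < n, σ k = τ k := fun k hk => not_not.mp (Nat.find_min hne hk)
    have hbp : branchPrefix σ n = branchPrefix τ n := branchPrefix_congr hagree
    set s := branchPrefix σ n with hsdef
    have hgap : ε < hPt s (uPt s) - hPt s (vPt s) := by
      have h1 := (hPtfacts s).2
      have h2 : hPt s (uPt s) - hPt s (vPt s) = hPt s (uPt s - vPt s) := by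
        rw [map_sub]
      rw [h2, h1, ← dist_eq_norm]
      exact (good s).2.2.2.2
    have habs : ε/2 ≤ |F σ (hY s) - F τ (hY s)| := by
      cases hσb : σ n with
      | false =>
        have hτb : τ n = true := by
          cases hτc : τ n
          · rw [hσb, hτc] at hn; exact absurd rfl hn
          · rfl
        have h1 := evalF_lower σ n hσb
        have h2 := evalF_upper τ n hτb
        rw [← hbp] at h2
        rw [← hsdef] at h1
        have h3 : ε/2 ≤ F σ (hY s) - F τ (hY s) := by linarith
        exact le_trans h3 (le_abs_self _)
      | true =>
        have hτb : τ n = false := by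
          cases hτc : τ n
          · rfl
          · rw [hσb, hτc] at hn; exact absurd rfl hn
        have h1 := evalF_upper σ n hσb
        have h2 := evalF_lower τ n hτb
        rw [← hbp] at h2
        rw [← hsdef] at h1
        have h3 : ε/2 ≤ F τ (hY s) - F σ (hY s) := by linarith
        calc ε/2 ≤ F τ (hY s) - F σ (hY s) := h3
          _ ≤ |F τ (hY s) - F σ (hY s)| := le_abs_self _
          _ = |F σ (hY s) - F τ (hY s)| := abs_sub_comm _ _
    have heval : (WeakDual.toStrongDual (F σ) - WeakDual.toStrongDual (F τ)) (hY s) =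
        F σ (hY s) - F τ (hY s) := rfl
    have hb := (WeakDual.toStrongDual (F σ) - WeakDual.toStrongDual (F τ)).le_opNorm (hY s)
    rw [hYnorm s, mul_one, heval, Real.norm_eq_abs] at hb
    linarith
  -- contradiction with separability of the dual of Y
  obtain ⟨D, hDc, hDd⟩ := TopologicalSpace.exists_countable_dense (↥Y →L[ℝ] ℝ)
  have hpick : ∀ σ : ℕ → Bool, ∃ dd, dd ∈ D ∧ dist (WeakDual.toStrongDual (F σ)) dd < ε/5 := by
    intro σ
    have h0 : WeakDual.toStrongDual (F σ) ∈ closure D := by rw [hDd.closure_eq]; trivial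
    obtain ⟨dd, hdd1, hdd2⟩ := Metric.mem_closure_iff.mp h0 (ε/5) (by positivity)
    exact ⟨dd, hdd1, hdd2⟩
  choose d hdD hd using hpick
  haveI := hDc.to_subtype
  have hinj : Function.Injective (fun σ : ℕ → Bool => (⟨d σ, hdD σ⟩ : ↥D)) := by
    intro σ τ hcon
    by_contra hne
    have h1 := sep σ τ hne
    have h2 : d σ = d τ := congrArg Subtype.val hcon
    have h3 := hd σ
    have h4 := hd τ
    rw [h2] at h3
    have h5 : dist (WeakDual.toStrongDual (F σ)) (WeakDual.toStrongDual (F τ)) ≤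
        dist (WeakDual.toStrongDual (F σ)) (d τ) + dist (d τ) (WeakDual.toStrongDual (F τ)) :=
      dist_triangle _ _ _
    rw [dist_comm (d τ)] at h5
    rw [dist_eq_norm] at h5
    linarith
  have hcount : Countable (ℕ → Bool) := hinj.countable
  have hsetinj : Function.Injective (fun (S : Set ℕ) => (fun n => decide (n ∈ S) : ℕ → Bool)) := by
    intro S T hST
    ext n
    have h6 := congrFun hST n
    simpa using h6
  have hSetcount : Countable (Set ℕ) := hsetinj.countable
  obtain ⟨f, hf⟩ := exists_injective_nat (Set ℕ)
  exact Function.cantor_injective f hf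

lemma exists_exposer_near [CompleteSpace X] (hSN : SliceNorming X)
    (g₀ : X →L[ℝ] ℝ) (hg₀ : ‖g₀‖ = 1) (δ : ℝ) (hδ : 0 < δ) :
    ∃ f : X →L[ℝ] ℝ, ‖f - g₀‖ < δ ∧ ‖f‖ = 1 ∧ ∃ x : X, ‖x‖ = 1 ∧ f x = 1 ∧
      ∀ xs : ℕ → X, (∀ n, ‖xs n‖ ≤ 1) →
        Filter.Tendsto (fun n => f (xs n)) Filter.atTop (𝓝 1) →
        Filter.Tendsto xs Filter.atTop (𝓝 x) := by
  classical
  -- one construction step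
  have step : ∀ (g : X →L[ℝ] ℝ) (n : ℕ) (α : ℝ), ∃ ga : (X →L[ℝ] ℝ) × ℝ,
      (‖g‖ = 1 ∧ 0 < α) →
        ‖ga.1‖ = 1 ∧ ‖ga.1 - g‖ < min (α/16) (δ*(1/2)^(n+3)) ∧ 0 < ga.2 ∧ ga.2 ≤ α/16 ∧
          SmallSlice ((1/2)^(n+1)) ga.2 ga.1 := by
    intro g n α
    by_cases hc : ‖g‖ = 1 ∧ 0 < α
    · have hρpos : 0 < min (α/16) (δ*(1/2)^(n+3)) := by
        apply lt_min (by linarith [hc.2]) (by positivity)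
      obtain ⟨g', h1, h2, α', hα', hss⟩ := hSN g hc.1 _ hρpos ((1/2)^(n+1)) (by positivity)
      refine ⟨(g', min α' (α/16)), fun _ => ⟨h1, h2, lt_min hα' (by linarith [hc.2]),
        min_le_right _ _, ?_⟩⟩
      intro u v hu hv h1' h2'
      have hle : min α' (α/16) ≤ α' := min_le_left _ _
      exact hss u v hu hv (by linarith) (by linarith)
    · exact ⟨(g, 1), fun hcon => absurd hcon hc⟩
  choose stp hstp using step
  set seq : ℕ → (X →L[ℝ] ℝ) × ℝ :=
    fun n => Nat.rec (g₀, (1:ℝ)) (fun n p => stp p.1 n p.2) n with hseqdef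
  set G : ℕ → X →L[ℝ] ℝ := fun n => (seq n).1 with hGdef
  set A : ℕ → ℝ := fun n => (seq n).2 with hAdef
  have seqS : ∀ n, seq (n+1) = stp (seq n).1 n (seq n).2 := fun n => rfl
  have hG0 : G 0 = g₀ := rfl
  have hA0 : A 0 = 1 := rfl
  set rho : ℕ → ℝ := fun n => min (A n / 16) (δ*(1/2)^(n+3)) with hrhodef
  have Inv : ∀ n, ‖G n‖ = 1 ∧ 0 < A n := by
    intro n
    induction n with
    | zero => exact ⟨by rw [hG0]; exact hg₀, by rw [hA0]; norm_num⟩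
    | succ n ih =>
      have h := hstp (seq n).1 n (seq n).2 ⟨ih.1, ih.2⟩
      exact ⟨h.1, h.2.2.1⟩
  have Rel : ∀ n, ‖G (n+1) - G n‖ < rho n ∧ A (n+1) ≤ A n / 16 ∧
      SmallSlice ((1/2)^(n+1)) (A (n+1)) (G (n+1)) := by
    intro n
    have h := hstp (seq n).1 n (seq n).2 ⟨(Inv n).1, (Inv n).2⟩
    exact ⟨h.2.1, h.2.2.2.1, h.2.2.2.2⟩
  have Amono : ∀ n m, n ≤ m → A m ≤ A n := by
    intro n m hnm
    induction m with
    | zero => simp_all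
    | succ m ih =>
      rcases Nat.lt_or_ge n (m+1) with h | h
      · have h2 := ih (Nat.lt_succ_iff.mp h)
        have h3 := (Rel m).2.1
        have h4 := (Inv m).2
        linarith
      · have : n = m + 1 := le_antisymm hnm h
        simp [this]
  have rhopos : ∀ n, 0 < rho n := by
    intro n
    exact lt_min (by linarith [(Inv n).2]) (by positivity)
  have rhohalf : ∀ n, rho (n+1) ≤ rho n / 2 := by
    intro n
    have h1 : A (n+1) / 16 ≤ (A n / 16) / 2 := by
      have := (Rel n).2.1
      have := (Inv n).2
      linarith
    have h2 : δ*(1/2)^(n+1+3) = (δ*(1/2)^(n+3))/2 := by ring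
    apply le_trans (min_le_min h1 (le_of_eq h2))
    rw [min_div_div_right (by norm_num : (0:ℝ) ≤ 2)]
  have rhoA : ∀ n, rho n ≤ A n / 16 := fun n => min_le_left _ _
  have rhoδ : ∀ n, rho n ≤ δ*(1/2)^(n+3) := fun n => min_le_right _ _
  have Tail : ∀ n m, n ≤ m → dist (G n) (G m) ≤ 2 * rho n - 2 * rho m := by
    intro n m hnm
    induction m with
    | zero =>
      have : n = 0 := Nat.le_zero.mp hnm
      simp [this]
    | succ m ih =>
      rcases Nat.lt_or_ge n (m+1) with h | h
      · have h2 := ih (Nat.lt_succ_iff.mp h)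
        have h3 : dist (G m) (G (m+1)) < rho m := by
          rw [dist_eq_norm, norm_sub_rev]
          exact (Rel m).1
        have h4 := rhohalf m
        have h5 := dist_triangle (G n) (G m) (G (m+1))
        linarith
      · have : n = m + 1 := le_antisymm hnm h
        simp [this]
  have hcauchy : CauchySeq G := by
    apply cauchySeq_of_le_geometric (1/2 : ℝ) (δ/8) (by norm_num)
    intro n
    have h1 : dist (G n) (G (n+1)) < rho n := by
      rw [dist_eq_norm, norm_sub_rev]
      exact (Rel n).1
    have h2 := rhoδ n
    have h3 : δ*(1/2)^(n+3) = δ/8 * (1/2)^n := by ring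
    linarith
  obtain ⟨gl, hgl⟩ := cauchySeq_tendsto_of_complete hcauchy
  have TailLim : ∀ n, dist (G n) gl ≤ 2 * rho n := by
    intro n
    have htd : Filter.Tendsto (fun m => dist (G n) (G m)) Filter.atTop (𝓝 (dist (G n) gl)) :=
      tendsto_const_nhds.dist hgl
    apply le_of_tendsto htd
    filter_upwards [Filter.eventually_ge_atTop n] with m hm
    have := Tail n m hm
    have := rhopos m
    linarith
  have hnorml : ‖gl‖ = 1 := by
    have h1 : Filter.Tendsto (fun n => ‖G n‖) Filter.atTop (𝓝 ‖gl‖) := hgl.norm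
    have h2 : (fun n => ‖G n‖) = fun _ => (1:ℝ) := funext (fun n => (Inv n).1)
    rw [h2] at h1
    exact tendsto_nhds_unique h1 tendsto_const_nhds
  have hdist0 : ‖gl - g₀‖ < δ := by
    have h1 := TailLim 0
    have h2 := rhoδ 0
    rw [← hG0, ← dist_eq_norm, dist_comm]
    have : δ * (1/2)^(0+3) = δ/8 := by ring
    linarith
  -- slices of the limit functional
  have Key : ∀ n (z : X), ‖z‖ ≤ 1 → 1 - A (n+1)/2 < gl z → 1 - A (n+1) < G (n+1) z := by
    intro n z hz h
    have hd := TailLim (n+1)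
    have hd2 : dist (G (n+1)) gl ≤ A (n+1) / 8 := by
      have := rhoA (n+1); linarith
    have h3 : (G (n+1) - gl) z ≥ -(A (n+1)/8) := by
      have h4 : |(G (n+1) - gl) z| ≤ ‖G (n+1) - gl‖ * ‖z‖ := by
        have := (G (n+1) - gl).le_opNorm z
        simpa [Real.norm_eq_abs] using this
      have h5 : ‖G (n+1) - gl‖ ≤ A (n+1)/8 := by
        rw [← dist_eq_norm]; exact hd2
      have h6 : ‖G (n+1) - gl‖ * ‖z‖ ≤ A (n+1)/8 := by
        nlinarith [norm_nonneg (G (n+1) - gl), norm_nonneg z, (Inv (n+1)).2]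
      have h7 := abs_le.mp (le_trans h4 h6)
      linarith [h7.1]
    have h8 : (G (n+1) - gl) z = G (n+1) z - gl z := by simp
    have h9 := (Inv (n+1)).2
    linarith
  have diam : ∀ n (z w : X), ‖z‖ ≤ 1 → ‖w‖ ≤ 1 → 1 - A (n+1)/2 < gl z →
      1 - A (n+1)/2 < gl w → dist z w ≤ (1/2)^(n+1) := by
    intro n z w hz hw h1 h2
    exact (Rel n).2.2 z w hz hw (Key n z hz h1) (Key n w hw h2)
  -- points in the slices of gl
  have pick : ∀ n, ∃ z : X, ‖z‖ ≤ 1 ∧ 1 - A (n+1)/2 < gl z := by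
    intro n
    have h1 : 1 - A (n+1)/2 < ‖gl‖ := by
      rw [hnorml]; linarith [(Inv (n+1)).2]
    obtain ⟨z, hz1, hz2⟩ := gl.exists_lt_apply_of_lt_opNorm h1
    by_cases hsign : 0 ≤ gl z
    · exact ⟨z, le_of_lt hz1, by rwa [Real.norm_eq_abs, abs_of_nonneg hsign] at hz2⟩
    · refine ⟨-z, by simpa using le_of_lt hz1, ?_⟩
      rw [map_neg]
      rwa [Real.norm_eq_abs, abs_of_neg (lt_of_not_ge hsign)] at hz2
  choose xs hxs1 hxs2 using pick
  have hxd : ∀ n m k, n ≤ m → n ≤ k → dist (xs m) (xs k) ≤ (1/2)^(n+1) := by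
    intro n m k hnm hnk
    apply diam n _ _ (hxs1 m) (hxs1 k)
    · have := Amono (n+1) (m+1) (by omega)
      linarith [hxs2 m]
    · have := Amono (n+1) (k+1) (by omega)
      linarith [hxs2 k]
  have hxcauchy : CauchySeq xs := by
    rw [Metric.cauchySeq_iff']
    intro e he
    obtain ⟨n, hn⟩ := exists_pow_lt_of_lt_one he (by norm_num : (1/2 : ℝ) < 1)
    refine ⟨n, fun m hm => ?_⟩
    have h1 := hxd n m n hm le_rfl
    have h2 : ((1:ℝ)/2)^(n+1) ≤ (1/2)^n := by
      apply pow_le_pow_of_le_one (by norm_num) (by norm_num) (by omega)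
    linarith
  obtain ⟨xl, hxl⟩ := cauchySeq_tendsto_of_complete hxcauchy
  have hxlnorm1 : ‖xl‖ ≤ 1 := le_of_tendsto hxl.norm
    (Filter.Eventually.of_forall hxs1)
  have hgeN : ∀ n, 1 - A (n+1)/2 ≤ gl xl := by
    intro n
    have htd : Filter.Tendsto (fun m => gl (xs m)) Filter.atTop (𝓝 (gl xl)) :=
      (gl.continuous.tendsto xl).comp hxl
    apply ge_of_tendsto htd
    filter_upwards [Filter.eventually_ge_atTop n] with m hm
    have h1 := hxs2 m
    have h2 := Amono (n+1) (m+1) (by omega)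
    linarith
  have hAbound : ∀ n, A n ≤ (1/16)^n := by
    intro n
    induction n with
    | zero => rw [hA0]; norm_num
    | succ n ih =>
      have h1 := (Rel n).2.1
      have h2 : ((1:ℝ)/16)^(n+1) = (1/16)^n / 16 := by ring
      rw [h2]
      linarith
  have hge1 : 1 ≤ gl xl := by
    by_contra hcon
    push_neg at hcon
    obtain ⟨k, hk⟩ := exists_pow_lt_of_lt_one (by linarith : (0:ℝ) < 1 - gl xl)
      (by norm_num : (1/16 : ℝ) < 1)
    have h1 := hgeN k
    have h2 := hAbound (k+1)
    have h3 : ((1:ℝ)/16)^(k+1) ≤ (1/16)^k := by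
      apply pow_le_pow_of_le_one (by norm_num) (by norm_num) (by omega)
    linarith [(Inv (k+1)).2]
  have hle1 : gl xl ≤ 1 := by
    calc gl xl ≤ |gl xl| := le_abs_self _
      _ ≤ ‖gl‖ * ‖xl‖ := by
          have := gl.le_opNorm xl
          simpa [Real.norm_eq_abs] using this
      _ ≤ 1 := by rw [hnorml]; linarith
  have hglxl : gl xl = 1 := le_antisymm hle1 hge1
  have hxlnorm : ‖xl‖ = 1 := by
    have h1 : 1 ≤ ‖xl‖ := by
      by_contra hcon
      push_neg at hcon
      have h2 : |gl xl| ≤ ‖gl‖ * ‖xl‖ := by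
        have := gl.le_opNorm xl
        simpa [Real.norm_eq_abs] using this
      rw [hglxl, hnorml, one_mul] at h2
      simp only [abs_one] at h2
      linarith
    linarith
  refine ⟨gl, hdist0, hnorml, xl, hxlnorm, hglxl, ?_⟩
  -- strong exposure
  intro ys hys1 hys2
  rw [Metric.tendsto_atTop]
  intro e he
  obtain ⟨n, hn⟩ := exists_pow_lt_of_lt_one he (by norm_num : (1/2 : ℝ) < 1)
  have h01 : (0:ℝ) < A (n+1)/2 := by linarith [(Inv (n+1)).2]
  obtain ⟨N1, hN1⟩ := Metric.tendsto_atTop.mp hys2 (A (n+1)/2) h01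
  refine ⟨N1, fun k hk => ?_⟩
  have hsl : 1 - A (n+1)/2 < gl (ys k) := by
    have h1 := hN1 k hk
    rw [Real.dist_eq] at h1
    have h2 := abs_lt.mp h1
    linarith [h2.1]
  have h1 : dist (ys k) (xs n) ≤ (1/2)^(n+1) :=
    diam n _ _ (hys1 k) (hxs1 n) hsl (hxs2 n)
  have h2 : dist (xs n) xl ≤ (1/2)^(n+1) := by
    have htd2 : Filter.Tendsto (fun m => dist (xs n) (xs m)) Filter.atTop
        (𝓝 (dist (xs n) xl)) := tendsto_const_nhds.dist hxl
    apply le_of_tendsto htd2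
    filter_upwards [Filter.eventually_ge_atTop n] with m hm
    exact hxd n n m le_rfl hm
  have h3 := dist_triangle (ys k) (xs n) xl
  have h4 : ((1:ℝ)/2)^(n+1) + (1/2)^(n+1) = (1/2)^n := by ring
  linarith



/-- If `X*` is Asplund and `X` satisfies (∗), then the strongly exposed points
of `B_X` are dense in `S_X`. -/
theorem dense_strongly_exposed_of_star
    (hAsplund : IsAsplund (X →L[ℝ] ℝ))
    (hstar : ∀ A : Set (X →L[ℝ] ℝ), A ⊆ normAttaining X →
      normAttaining X ⊆ closure A →
      {x : X | ‖x‖ = 1} ⊆ closure {x : X | ‖x‖ = 1 ∧ (dualityMap x ∩ A).Nonempty}) :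
    {x : X | ‖x‖ = 1} ⊆ closure {x : X | ‖x‖ = 1 ∧ StronglyExposed x} := by
  have hSN : SliceNorming X := sliceNorming_of_asplund hAsplund
  set A : Set (X →L[ℝ] ℝ) := {f | ‖f‖ = 1 ∧ ∃ x : X, ‖x‖ = 1 ∧ f x = 1 ∧
    ∀ xs : ℕ → X, (∀ n, ‖xs n‖ ≤ 1) → Tendsto (fun n => f (xs n)) atTop (𝓝 1) →
      Tendsto xs atTop (𝓝 x)} with hAdef
  have hA1 : A ⊆ normAttaining X := by
    rintro f ⟨h1, x, h2, h3, -⟩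
    exact ⟨h1, x, h2, h3⟩
  have hA2 : normAttaining X ⊆ closure A := by
    rintro f ⟨h1, -⟩
    rw [Metric.mem_closure_iff]
    intro r hr
    obtain ⟨g, hg1, hg2, x, hx1, hx2, hx3⟩ := exists_exposer_near hSN f h1 r hr
    refine ⟨g, ⟨hg2, x, hx1, hx2, hx3⟩, ?_⟩
    rw [dist_eq_norm, norm_sub_rev]
    exact hg1
  have h3 := hstar A hA1 hA2
  refine subset_trans h3 (closure_mono ?_)
  rintro x ⟨hx1, f, hf1, hf2⟩
  obtain ⟨hfn, hfx⟩ := hf1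
  obtain ⟨-, y, hy1, hy2, hy3⟩ := hf2
  have hxy : x = y := by
    have hconst : Tendsto (fun _ : ℕ => x) atTop (𝓝 y) := by
      apply hy3 (fun _ => x) (fun _ => le_of_eq hx1)
      simpa [hfx] using (tendsto_const_nhds : Tendsto (fun _ : ℕ => (1:ℝ)) atTop (𝓝 1))
    exact tendsto_nhds_unique tendsto_const_nhds hconst
  refine ⟨hx1, f, hfn, hfx, ?_⟩
  rw [hxy]
  exact hy3
end

section
/- Let X be a real Banach space with dim X ≥ 2 satisfying: NA(S_{X*}) is comeager in S_{X*}, X* is weakly Asplund, and condition (∗). Then the ω-exposed points of B_X are dense in S_X. -/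
open Filter Topology

variable {X : Type*} [NormedAddCommGroup X] [NormedSpace ℝ X] [CompleteSpace X]

/-- `f` ω-exposes `x`. -/
def OmegaExposes (f : X →L[ℝ] ℝ) (x : X) : Prop :=
  ‖f‖ = 1 ∧ f x = 1 ∧
    ∀ xs : ℕ → X, (∀ n, ‖xs n‖ ≤ 1) →
      Tendsto (fun n => f (xs n)) atTop (𝓝 1) →
      ∀ g : X →L[ℝ] ℝ, Tendsto (fun n => g (xs n)) atTop (𝓝 (g x))

/-- The ω-exposed points of the closed unit ball. -/
def omegaExposedPoints (X : Type*) [NormedAddCommGroup X] [NormedSpace ℝ X] : Set X :=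
  {x | ‖x‖ = 1 ∧ ∃ f : X →L[ℝ] ℝ, OmegaExposes f x}

/-- Theorem 2.1: a norm-attaining, Gâteaux-smooth unit functional ω-exposes the
point at which it attains its norm. -/
theorem omegaExposes_of_smooth (f : X →L[ℝ] ℝ) (x : X) (hf : ‖f‖ = 1) (hx : ‖x‖ = 1)
    (hfx : f x = 1)
    (hsmooth : ∃! ψ : (X →L[ℝ] ℝ) →L[ℝ] ℝ, ‖ψ‖ = 1 ∧ ψ f = 1) :
    OmegaExposes f x := by
  obtain ⟨ψ₀, -, huniq⟩ := hsmooth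
  refine ⟨hf, hfx, ?_⟩
  intro xs hxs htend g
  -- the canonical image of `x` is the unique norming functional of `f`
  have hιx : NormedSpace.inclusionInDoubleDual ℝ X x = ψ₀ := by
    refine huniq _ ⟨?_, ?_⟩
    · have := (NormedSpace.inclusionInDoubleDualLi ℝ (E := X)).norm_map x
      simpa [hx, NormedSpace.inclusionInDoubleDualLi] using this
    · simpa [NormedSpace.dual_def] using hfx
  -- prove convergence by contradiction
  by_contra hcon
  rw [Metric.tendsto_atTop] at hcon
  push_neg at hcon
  obtain ⟨ε, hε, hfreq⟩ := hcon
  have hfreq' : ∃ᶠ n in atTop, ε ≤ dist (g (xs n)) (g x) := by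
    rw [frequently_atTop]
    intro N; obtain ⟨n, hn, hd⟩ := hfreq N; exact ⟨n, hn, hd⟩
  obtain ⟨φ, hφmono, hφ⟩ := extraction_of_frequently_atTop hfreq'
  -- the sequence in the weak-star dual of `X*`
  set u : ℕ → WeakDual ℝ (X →L[ℝ] ℝ) :=
    fun k => (NormedSpace.inclusionInDoubleDual ℝ X (xs (φ k)) : (X →L[ℝ] ℝ) →L[ℝ] ℝ)
  have humem : ∀ k, u k ∈ WeakDual.toStrongDual ⁻¹' Metric.closedBall 0 1 := by
    intro k
    have : ‖NormedSpace.inclusionInDoubleDual ℝ X (xs (φ k))‖ = ‖xs (φ k)‖ :=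
      (NormedSpace.inclusionInDoubleDualLi ℝ (E := X)).norm_map _
    simp only [Set.mem_preimage, Metric.mem_closedBall, dist_zero_right]
    exact le_trans (le_of_eq ((dist_zero_right (E := (X →L[ℝ] ℝ) →L[ℝ] ℝ) _).trans this)) (hxs (φ k))
  have hle : map u atTop ≤ 𝓟 (WeakDual.toStrongDual ⁻¹' Metric.closedBall (0:(X →L[ℝ] ℝ) →L[ℝ] ℝ) 1) := by
    rw [le_principal_iff]
    exact mem_map.2 (Eventually.of_forall humem)
  obtain ⟨ψ, hψball, hψcl⟩ :=
    (WeakDual.isCompact_closedBall (𝕜 := ℝ) (E := X →L[ℝ] ℝ) 0 1).exists_clusterPt hle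
  -- evaluations of `ψ` are cluster points of the evaluated sequences
  have heval : ∀ h : X →L[ℝ] ℝ,
      ClusterPt (ψ h) (map (fun k => h (xs (φ k))) atTop) := by
    intro h
    have hc : ContinuousAt (fun χ : WeakDual ℝ (X →L[ℝ] ℝ) => χ h) ψ :=
      (WeakDual.eval_continuous h).continuousAt
    have := hψcl.map hc (tendsto_map (f := fun χ : WeakDual ℝ (X →L[ℝ] ℝ) => χ h))
    rw [Filter.map_map] at this
    exact this
  -- `ψ f = 1`
  have hψf : ψ f = 1 := by
    have htend' : Tendsto (fun k => f (xs (φ k))) atTop (𝓝 1) :=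
      htend.comp hφmono.tendsto_atTop
    exact eq_of_nhds_neBot ((heval f).mono htend')
  -- `‖ψ‖ = 1`, hence `ψ = ψ₀ = ι x`
  have hψle : ‖WeakDual.toStrongDual ψ‖ ≤ 1 := by
    simpa [dist_zero_right] using hψball
  have hψge : (1:ℝ) ≤ ‖WeakDual.toStrongDual ψ‖ := by
    have := (WeakDual.toStrongDual ψ).le_opNorm f
    rw [hf, mul_one] at this
    calc (1:ℝ) = ‖ψ f‖ := by rw [hψf]; simp
    _ ≤ ‖WeakDual.toStrongDual ψ‖ := this
  have hψeq : WeakDual.toStrongDual ψ = ψ₀ := huniq _ ⟨le_antisymm hψle hψge, hψf⟩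
  -- hence `ψ g = g x`
  have hψg : ψ g = g x := by
    have : WeakDual.toStrongDual ψ = NormedSpace.inclusionInDoubleDual ℝ X x :=
      hψeq.trans hιx.symm
    have := congrArg (fun χ : (X →L[ℝ] ℝ) →L[ℝ] ℝ => χ g) this
    simpa [NormedSpace.dual_def] using this
  -- but `ψ g` is a cluster point of a sequence staying `ε`-away from `g x`
  have hmemS : ψ g ∈ closure {t : ℝ | ε ≤ dist t (g x)} := by
    rw [mem_closure_iff_clusterPt]
    refine ((heval g).mono ?_)
    rw [le_principal_iff]
    exact mem_map.2 (Eventually.of_forall hφ)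
  have hclosed : IsClosed {t : ℝ | ε ≤ dist t (g x)} :=
    isClosed_le continuous_const (continuous_id.dist continuous_const)
  rw [hclosed.closure_eq] at hmemS
  rw [hψg] at hmemS
  simp only [Set.mem_setOf_eq, dist_self] at hmemS
  linarith

/-- If `dim X ≥ 2`, `NA(S_{X*})` is comeager in `S_{X*}`, `X*` is weakly
Asplund, and `X` satisfies (∗), then the ω-exposed points of `B_X` are dense in `S_X`. -/
theorem dense_omega_exposed_points
    (hdim : 2 ≤ Module.rank ℝ X)
    (hNAcomeager :
      {f : {g : X →L[ℝ] ℝ // ‖g‖ = 1} | ∃ x : X, ‖x‖ = 1 ∧ f.1 x = 1} ∈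
        residual {g : X →L[ℝ] ℝ // ‖g‖ = 1})
    (hweaklyAsplund : ∃ G : Set {g : X →L[ℝ] ℝ // ‖g‖ = 1},
      IsGδ G ∧ Dense G ∧
        ∀ f ∈ G, ∃! ψ : (X →L[ℝ] ℝ) →L[ℝ] ℝ, ‖ψ‖ = 1 ∧ ψ f.1 = 1)
    (hstar : ∀ A : Set (X →L[ℝ] ℝ), A ⊆ normAttaining X →
      normAttaining X ⊆ closure A →
      {x : X | ‖x‖ = 1} ⊆ closure {x : X | ‖x‖ = 1 ∧ (dualityMap x ∩ A).Nonempty}) :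
    {x : X | ‖x‖ = 1} ⊆ closure (omegaExposedPoints X) := by
  classical
  obtain ⟨G, hGδ, hGdense, hGsmooth⟩ := hweaklyAsplund
  -- the sphere of the dual is a Baire space
  have hclosed : IsClosed {g : X →L[ℝ] ℝ | ‖g‖ = 1} :=
    isClosed_eq continuous_norm continuous_const
  have : CompleteSpace {g : X →L[ℝ] ℝ // ‖g‖ = 1} := hclosed.completeSpace_coe
  -- `A` = smooth norm-attaining unit functionals
  set NA' : Set {g : X →L[ℝ] ℝ // ‖g‖ = 1} :=
    {f | ∃ x : X, ‖x‖ = 1 ∧ f.1 x = 1} with hNA'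
  set A : Set (X →L[ℝ] ℝ) := Subtype.val '' (NA' ∩ G) with hA
  have hAsub : A ⊆ normAttaining X := by
    rintro f ⟨⟨f', hf'⟩, ⟨⟨y, hy1, hy2⟩, -⟩, rfl⟩
    exact ⟨hf', y, hy1, hy2⟩
  have hAdense : normAttaining X ⊆ closure A := by
    rintro f ⟨hf1, hfatt⟩
    have hdense : Dense (NA' ∩ G) :=
      dense_of_mem_residual (Filter.inter_mem hNAcomeager (residual_of_dense_Gδ hGδ hGdense))
    have hmem : (⟨f, hf1⟩ : {g : X →L[ℝ] ℝ // ‖g‖ = 1}) ∈ closure (NA' ∩ G) := hdense _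
    have := map_mem_closure continuous_subtype_val hmem
      (fun y hy => Set.mem_image_of_mem _ hy)
    exact this
  refine fun x hx => ?_
  have hsub : {x : X | ‖x‖ = 1 ∧ (dualityMap x ∩ A).Nonempty} ⊆ omegaExposedPoints X := by
    rintro y ⟨hy1, f, ⟨hfd1, hfd2⟩, hfA⟩
    obtain ⟨f', ⟨-, hf'G⟩, hf'eq⟩ := hfA
    refine ⟨hy1, f, omegaExposes_of_smooth f y hfd1 hy1 hfd2 ?_⟩
    have := hGsmooth f' hf'G
    rwa [hf'eq] at this
  exact closure_mono hsub (hstar A hAsub hAdense hx)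
end
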